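/- arXiv:2307.01897 — 12 statements merged into one kernel-verified Lean document; each statement's English description precedes it below -/
import Mathlib

section
/- Let v ≥ 0 be an integer. Then v = g(ρ) for some rotor configuration ρ of the path multigraph P^{x,y}_n if and only if m(v) = 0 and the tuple (digits(v), 0) of length n+2 belongs to L_d^n. -/
/-- `F = Σ_{k=0}^n x^(n−k)·y^k`. -/
def Fval (n x y : ℕ) : ℕ := ∑ k ∈ Finset.range (n + 1), x ^ (n - k) * y ^ k

/-- The stable decomposition `v = Σ_{k=0}^n c_k·x^(n−k)·y^k + m·y^(n+1)`
with digits `c_k ∈ {0,…,y−1}`. -/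
def IsStableDecomp (n x y : ℕ) (v : ℤ) (c : Fin (n + 1) → ℕ) (m : ℤ) : Prop :=
  (∀ k : Fin (n + 1), c k < y) ∧
    v = (∑ k : Fin (n + 1), (c k : ℤ) * (x : ℤ) ^ (n - (k : ℕ)) * (y : ℤ) ^ (k : ℕ))
          + m * (y : ℤ) ^ (n + 1)

/-- `L_d^n`: tuples `(c_0,…,c_{n+1})` with `c_{n+1} = 0` matched by
`[0,y−1]*·0·[1,x]*·0`. -/
def Ld (n x y : ℕ) : Set (Fin (n + 2) → ℕ) :=
  {c | c (Fin.last (n + 1)) = 0 ∧ ∃ k : Fin (n + 1),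
    (∀ i : Fin (n + 2), (i : ℕ) < (k : ℕ) → c i < y) ∧
    c k.castSucc = 0 ∧
    (∀ i : Fin (n + 2), (k : ℕ) < (i : ℕ) → (i : ℕ) ≤ n → 1 ≤ c i ∧ c i ≤ x)}

/-- `L_a^n`: tuples `(c_0,…,c_{n+1})` with `c_{n+1} = 0` matched by
`[1,y]*·0·[0,x−1]*·0`. -/
def La (n x y : ℕ) : Set (Fin (n + 2) → ℕ) :=
  {c | c (Fin.last (n + 1)) = 0 ∧ ∃ k : Fin (n + 1),
    (∀ i : Fin (n + 2), (i : ℕ) < (k : ℕ) → 1 ≤ c i ∧ c i ≤ y) ∧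
    c k.castSucc = 0 ∧
    (∀ i : Fin (n + 2), (k : ℕ) < (i : ℕ) → (i : ℕ) ≤ n → c i < x)}

/-- The value `val(c) = Σ_{k=0}^n c_k·x^(n−k)·y^k` of a tuple. -/
def tupleVal (n x y : ℕ) (c : Fin (n + 2) → ℕ) : ℕ :=
  ∑ k : Fin (n + 1), c k.castSucc * x ^ (n - (k : ℕ)) * y ^ (k : ℕ)

/-- `G = {val(c) : c ∈ L_d^n}` viewed as a set of integers. -/
def Gset (n x y : ℕ) : Set ℤ := {w | ∃ c ∈ Ld n x y, (tupleVal n x y c : ℤ) = w}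

/-- Arcmonic value `g_k(j)` of arc number `j` at vertex `u_k`. -/
def gk (n x y k j : ℕ) : ℕ :=
  if j ≤ x then j * x ^ (n - k) * y ^ k else (x + y - j) * x ^ (n - k + 1) * y ^ (k - 1)

/-- Arcmonic value of a rotor configuration `ρ : {1,…,n} → {0,…,x+y−1}`,
encoded with `ρ k` the arc chosen at vertex `u_{k+1}` for `k : Fin n`. -/
def gRotor (n x y : ℕ) (ρ : Fin n → ℕ) : ℕ := ∑ k : Fin n, gk n x y ((k : ℕ) + 1) (ρ k)

/-!
Read top vertex first, `g(ρ)` follows a Horner scheme: the value of the lower vertices is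
multiplied by `x`, and a new top arc `j` adds `j·y^k` if `j ≤ x` and `(x + y - j)·x·y^(k-1)`
otherwise. Along this scheme the digits stay of the shape `[1,x]*·0·[0,y-1]*` (top digit first):
a left arc adds less than `y` to the digit below the top, and a digit reaching `y` is carried as
`x` one level up, because `y·d_k = x·d_(k+1)`. Conversely every such word is the value of the
configuration with right arcs `c_k` above the pivot and left arcs `x + y - c_k` below it. Since
`x` and `y` are coprime the stable decomposition is unique, which identifies the digits of `v`
with that word and forces `m(v) = 0`.
-/

section

variable {x y : ℕ}

lemma digit_eq_of_add_mul_eq (hcop : Nat.Coprime x y) {a a' k : ℕ} (ha : a < y) (ha' : a' < y)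
    {s s' : ℤ} (h : (a : ℤ) * x ^ k + y * s = a' * x ^ k + y * s') : a = a' ∧ s = s' := by
  have hy : (y : ℤ) ≠ 0 := by exact_mod_cast (by omega : y ≠ 0)
  have hdvd : (y : ℤ) ∣ ((a : ℤ) - a') * x ^ k := ⟨s' - s, by linear_combination h⟩
  have hcop' : IsCoprime (y : ℤ) ((x : ℤ) ^ k) :=
    (Nat.isCoprime_iff_coprime.mpr hcop.symm).pow_right
  have hdiff := Int.eq_zero_of_abs_lt_dvd (hcop'.dvd_of_dvd_mul_right hdvd)
    (by rw [abs_lt]; omega)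
  have had : a = a' := by omega
  subst had
  exact ⟨rfl, mul_left_cancel₀ hy (by linarith)⟩

/-- Read off the lowest digit modulo `y`, then divide by `y`. -/
lemma stableDecomp_unique (hcop : Nat.Coprime x y) :
    ∀ (n : ℕ) (c c' : Fin (n + 1) → ℕ) (m m' : ℤ), (∀ k, c k < y) → (∀ k, c' k < y) →
      (∑ k, (c k : ℤ) * x ^ (n - k : ℕ) * y ^ (k : ℕ)) + m * y ^ (n + 1) =
        (∑ k, (c' k : ℤ) * x ^ (n - k : ℕ) * y ^ (k : ℕ)) + m' * y ^ (n + 1) →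
      c = c' ∧ m = m'
  | 0, c, c', m, m', hc, hc', h => by
    obtain ⟨h0, hm⟩ := digit_eq_of_add_mul_eq (k := 0) hcop (hc 0) (hc' 0) (s := m) (s' := m')
      (by simpa [mul_comm] using h)
    exact ⟨funext fun k => by rwa [Fin.fin_one_eq_zero k], hm⟩
  | n + 1, c, c', m, m', hc, hc', h => by
    have hsplit : ∀ (d : Fin (n + 2) → ℕ) (m : ℤ),
        (∑ k, (d k : ℤ) * x ^ (n + 1 - k : ℕ) * y ^ (k : ℕ)) + m * y ^ (n + 2) =
          d 0 * x ^ (n + 1) +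
            y * ((∑ k : Fin (n + 1), ((Fin.tail d k : ℕ) : ℤ) * x ^ (n - k : ℕ) * y ^ (k : ℕ))
              + m * y ^ (n + 1)) := by
      intro d m
      rw [Fin.sum_univ_succ, mul_add, Finset.mul_sum]
      simp only [Fin.val_zero, Fin.val_succ, Nat.sub_zero, Nat.add_sub_add_right, Fin.tail]
      ring_nf
    rw [hsplit, hsplit] at h
    obtain ⟨h0, hrest⟩ := digit_eq_of_add_mul_eq hcop (hc 0) (hc' 0) h
    obtain ⟨htail, hm⟩ := stableDecomp_unique hcop n _ _ m m' (fun k => hc _) (fun k => hc' _) hrest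
    exact ⟨by rw [← Fin.cons_self_tail c, ← Fin.cons_self_tail c', h0]; exact congrArg _ htail, hm⟩

/-- Value of a digit word written top digit first: a word `[c_N, …, c_0]` has value
`Σ c_k x^(N-k) y^k`. -/
def wordValue (x y : ℕ) : List ℕ → ℕ
  | [] => 0
  | d :: t => d * y ^ t.length + x * wordValue x y t

/-- Arcmonic value of a list of arcs written top vertex first. -/
def arcsValue (x y : ℕ) : List ℕ → ℕ
  | [] => 0
  | j :: t => gk (t.length + 1) x y (t.length + 1) j + x * arcsValue x y t

/-- The words of `L_d` with the final `0` dropped, top digit first. -/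
def IsLdWord (x y : ℕ) (W : List ℕ) : Prop :=
  ∃ A B : List ℕ, (∀ a ∈ A, 1 ≤ a ∧ a ≤ x) ∧ (∀ b ∈ B, b < y) ∧ W = A ++ 0 :: B

lemma IsLdWord.lt (hxy : x < y) {W : List ℕ} (hW : IsLdWord x y W) : ∀ d ∈ W, d < y := by
  obtain ⟨A, B, hA, hB, rfl⟩ := hW
  simp only [List.mem_append, List.mem_cons]
  rintro d (hd | rfl | hd)
  exacts [(hA d hd).2.trans_lt hxy, by omega, hB d hd]

lemma IsLdWord.zero_cons (hxy : x < y) {W : List ℕ} (hW : IsLdWord x y W) :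
    IsLdWord x y (0 :: W) :=
  ⟨[], W, by simp, hW.lt hxy, rfl⟩

lemma IsLdWord.cons {W : List ℕ} (hW : IsLdWord x y W) {a : ℕ} (h1 : 1 ≤ a) (ha : a ≤ x) :
    IsLdWord x y (a :: W) := by
  obtain ⟨A, B, hA, hB, rfl⟩ := hW
  refine ⟨a :: A, B, ?_, hB, rfl⟩
  simp only [List.mem_cons]
  rintro b (rfl | hb)
  exacts [⟨h1, ha⟩, hA b hb]

lemma IsLdWord.of_cons {d : ℕ} {W : List ℕ} (hW : IsLdWord x y (d :: W)) (hd : 0 < d) :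
    d ≤ x ∧ IsLdWord x y W := by
  obtain ⟨_ | ⟨a, A⟩, B, hA, hB, hdW⟩ := hW
  · simp only [List.nil_append, List.cons.injEq] at hdW
    omega
  · simp only [List.cons_append, List.cons.injEq] at hdW
    obtain ⟨rfl, rfl⟩ := hdW
    exact ⟨(hA d List.mem_cons_self).2, A, B, fun a ha => hA a (List.mem_cons_of_mem _ ha), hB, rfl⟩

/-- A top digit reaching `y` carries `x` one level up, since `y·d_k = x·d_(k+1)`. -/
lemma IsLdWord.exists_add_top (hxy : x < y) {d b : ℕ} {W : List ℕ} (hW : IsLdWord x y (d :: W))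
    (hb : b < y) : ∃ W', IsLdWord x y W' ∧ W'.length = W.length + 2 ∧
      wordValue x y W' = wordValue x y (0 :: (d + b) :: W) := by
  by_cases hdb : d + b < y
  · refine ⟨0 :: (d + b) :: W, ⟨[], (d + b) :: W, by simp, ?_, rfl⟩, rfl, rfl⟩
    simp only [List.mem_cons]
    rintro e (rfl | he)
    exacts [hdb, hW.lt hxy e (List.mem_cons_of_mem _ he)]
  obtain ⟨hdx, hW'⟩ := hW.of_cons (by omega)
  obtain ⟨r, hr⟩ := Nat.exists_eq_add_of_le (not_lt.mp hdb)
  have hval : wordValue x y (x :: r :: W) = wordValue x y (0 :: (d + b) :: W) := by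
    simp only [wordValue, List.length_cons, hr, pow_succ]
    ring
  refine ⟨x :: r :: W, ?_, rfl, hval⟩
  rcases Nat.eq_zero_or_pos r with rfl | hr0
  · exact ⟨[x], W, by simp; omega, hW'.lt hxy, rfl⟩
  · exact (hW'.cons hr0 (by omega)).cons (by omega) le_rfl

lemma exists_isLdWord_wordValue_eq_arcsValue (hxy : x < y) :
    ∀ L : List ℕ, (∀ j ∈ L, j < x + y) →
      ∃ W, IsLdWord x y W ∧ W.length = L.length + 1 ∧ wordValue x y W = arcsValue x y L
  | [], _ => ⟨[0], ⟨[], [], by simp, by simp, rfl⟩, rfl, rfl⟩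
  | j :: t, hL => by
    obtain ⟨W, hW, hlen, hval⟩ :=
      exists_isLdWord_wordValue_eq_arcsValue hxy t fun i hi => hL i (List.mem_cons_of_mem _ hi)
    have hj := hL j List.mem_cons_self
    by_cases hjx : j ≤ x
    · refine ⟨j :: W, ?_, by simp [hlen], ?_⟩
      · rcases Nat.eq_zero_or_pos j with rfl | hj0
        exacts [hW.zero_cons hxy, hW.cons hj0 hjx]
      · simp [wordValue, arcsValue, gk, hjx, hlen, hval]
    · obtain _ | ⟨d, W₀⟩ := W
      · obtain ⟨A, B, -, -, hnil⟩ := hW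
        simp at hnil
      obtain ⟨W', hW', hlen', hval'⟩ := hW.exists_add_top hxy (b := x + y - j) (by omega)
      refine ⟨W', hW', by simp_all, ?_⟩
      simp only [List.length_cons, add_left_inj] at hlen
      rw [hval', arcsValue, ← hval]
      simp only [wordValue, gk, hjx, if_false, hlen, Nat.sub_self, Nat.add_sub_cancel]
      ring

/-- A digit `b ≠ 0` below the pivot is produced by the left arc `x + y - b` one vertex up. -/
lemma exists_arcsValue_eq_wordValue_zero_cons :
    ∀ B : List ℕ, (∀ b ∈ B, b < y) →
      ∃ L, (∀ j ∈ L, j < x + y) ∧ L.length = B.length ∧ arcsValue x y L = wordValue x y (0 :: B)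
  | [], _ => ⟨[], by simp, rfl, by simp [arcsValue, wordValue]⟩
  | b :: B, hB => by
    obtain ⟨L, hL, hlen, hval⟩ :=
      exists_arcsValue_eq_wordValue_zero_cons B fun e he => hB e (List.mem_cons_of_mem _ he)
    have hb := hB b List.mem_cons_self
    refine ⟨(if b = 0 then 0 else x + y - b) :: L, ?_, by simp [hlen], ?_⟩
    · simp only [List.mem_cons]
      rintro j (rfl | hj)
      exacts [by split_ifs <;> omega, hL j hj]
    · simp only [arcsValue, wordValue, hval, List.length_cons, hlen] at *
      split_ifs with hb0
      · simp [gk, hb0]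
      · rw [gk, if_neg (by omega), Nat.sub_self, Nat.add_sub_cancel, Nat.sub_sub_self (by omega)]
        ring

lemma IsLdWord.exists_arcsValue_eq (hy : 0 < y) {W : List ℕ} (hW : IsLdWord x y W) :
    ∃ L, (∀ j ∈ L, j < x + y) ∧ L.length + 1 = W.length ∧ arcsValue x y L = wordValue x y W := by
  obtain ⟨A, B, hA, hB, rfl⟩ := hW
  induction A with
  | nil =>
    obtain ⟨L, hL, hlen, hval⟩ := exists_arcsValue_eq_wordValue_zero_cons (x := x) B hB
    exact ⟨L, hL, by simp [hlen], hval⟩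
  | cons a A ih =>
    obtain ⟨L, hL, hlen, hval⟩ := ih fun e he => hA e (List.mem_cons_of_mem _ he)
    obtain ⟨ha1, hax⟩ := hA a List.mem_cons_self
    refine ⟨a :: L, ?_, by simp [← hlen], ?_⟩
    · simp only [List.mem_cons]
      rintro j (rfl | hj)
      exacts [by omega, hL j hj]
    · simp only [List.cons_append, arcsValue, wordValue, gk, hax, if_true, hval, ← hlen]
      simp

lemma exists_ofFn_rev_eq (W : List ℕ) {n : ℕ} (h : W.length = n) :
    ∃ c : Fin n → ℕ, List.ofFn (fun k => c k.rev) = W := by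
  subst h
  exact ⟨fun k => W[k.rev], by simp⟩

lemma ofFn_rev_succ {n : ℕ} (c : Fin (n + 1) → ℕ) :
    List.ofFn (fun k => c k.rev) = c (Fin.last n) :: List.ofFn (fun k => Fin.init c k.rev) := by
  simp [List.ofFn_succ, Fin.rev_succ, Fin.init]

lemma sum_eq_wordValue_ofFn_rev :
    ∀ (n : ℕ) (c : Fin (n + 1) → ℕ),
      ∑ k, c k * x ^ (n - k : ℕ) * y ^ (k : ℕ) = wordValue x y (List.ofFn fun k => c k.rev)
  | 0, c => by simp [wordValue]
  | n + 1, c => by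
    rw [ofFn_rev_succ, wordValue, ← sum_eq_wordValue_ofFn_rev n, Fin.sum_univ_castSucc,
      Finset.mul_sum]
    simp only [List.length_ofFn, Fin.val_last, Nat.sub_self, pow_zero, mul_one, Fin.val_castSucc,
      Fin.init]
    rw [add_comm]
    congr 1
    refine Finset.sum_congr rfl fun k _ => ?_
    rw [Nat.sub_add_comm (by omega), pow_succ]
    ring

lemma gk_succ {n k : ℕ} (hk : k ≤ n) (j : ℕ) : gk (n + 1) x y k j = x * gk n x y k j := by
  unfold gk
  rw [Nat.sub_add_comm hk]
  split_ifs <;> ring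

lemma gRotor_eq_arcsValue :
    ∀ (n : ℕ) (ρ : Fin n → ℕ), gRotor n x y ρ = arcsValue x y (List.ofFn fun k => ρ k.rev)
  | 0, ρ => rfl
  | n + 1, ρ => by
    rw [ofFn_rev_succ, arcsValue, ← gRotor_eq_arcsValue n, gRotor, gRotor, Fin.sum_univ_castSucc,
      Finset.mul_sum]
    simp only [List.length_ofFn, Fin.val_last, Fin.val_castSucc, Fin.init]
    rw [add_comm]
    congr 1
    exact Finset.sum_congr rfl fun k _ => gk_succ (by omega) _

lemma isLdWord_iff_getElem (W : List ℕ) :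
    IsLdWord x y W ↔ ∃ q, ∃ hq : q < W.length, (∀ i (hi : i < q), 1 ≤ W[i] ∧ W[i] ≤ x) ∧
      W[q] = 0 ∧ ∀ i (hi : i < W.length), q < i → W[i] < y := by
  constructor
  · rintro ⟨A, B, hA, hB, rfl⟩
    refine ⟨A.length, by simp, fun i hi => ?_, by simp, fun i hi hqi => ?_⟩
    · rw [List.getElem_append_left hi]
      exact hA _ (List.getElem_mem _)
    · rw [List.getElem_append_right hqi.le]
      obtain ⟨k, hk⟩ := Nat.exists_eq_add_of_lt hqi
      simp only [hk, Nat.add_assoc, Nat.add_sub_cancel_left, List.getElem_cons_succ]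
      exact hB _ (List.getElem_mem _)
  · rintro ⟨q, hq, hA, h0, hB⟩
    refine ⟨W.take q, W.drop (q + 1), fun a ha => ?_, fun b hb => ?_, ?_⟩
    · obtain ⟨i, hi, rfl⟩ := List.mem_iff_getElem.mp ha
      simp only [List.length_take] at hi
      simpa using hA i (by omega)
    · obtain ⟨i, hi, rfl⟩ := List.mem_iff_getElem.mp hb
      simp only [List.length_drop] at hi
      simpa using hB (q + 1 + i) (by omega) (by omega)
    · rw [← h0, ← List.drop_eq_getElem_cons, List.take_append_drop]

lemma snoc_mem_Ld_iff_isLdWord {n : ℕ} (c : Fin (n + 1) → ℕ) :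
    Fin.snoc c 0 ∈ Ld n x y ↔ IsLdWord x y (List.ofFn fun k => c k.rev) := by
  have hle (k : Fin (n + 1)) : ¬ n + 1 < (k : ℕ) := by omega
  have hrev (i : Fin (n + 1)) (h : n - i < n + 1) : (⟨n - i, h⟩ : Fin (n + 1)).rev = i := by
    ext; simp only [Fin.val_rev]; omega
  rw [isLdWord_iff_getElem]
  simp only [Ld, Set.mem_ofPred_eq, Fin.snoc_last, true_and, List.length_ofFn, List.getElem_ofFn,
    Fin.forall_fin_succ' (n := n + 1), Fin.snoc_castSucc, Fin.val_castSucc, Fin.val_last,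
    Fin.is_le, hle, Nat.not_succ_le_self, false_imp_iff, and_true, imp_true_iff, forall_const]
  constructor
  · rintro ⟨p, hB, h0, hA⟩
    refine ⟨n - p, by omega, fun i hi => hA _ ?_, by rwa [hrev], fun i hi hpi => hB _ ?_⟩ <;>
      simp only [Fin.val_rev] <;> omega
  · rintro ⟨q, hq, hA, h0, hB⟩
    refine ⟨Fin.rev ⟨q, hq⟩, fun i hi => ?_, h0, fun i hi => ?_⟩ <;>
      simp only [Fin.val_rev] at hi
    · simpa [hrev] using hB (n - i) (by omega) (by omega)
    · simpa [hrev] using hA (n - i) (by omega)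

end

theorem arcmonic_value_iff_general
    (n x y : ℕ) (hxy : x < y) (hcop : Nat.Coprime x y)
    (v : ℤ) (c : Fin (n + 1) → ℕ) (m : ℤ)
    (hdec : IsStableDecomp n x y v c m) :
    (∃ ρ : Fin n → ℕ, (∀ k : Fin n, ρ k < x + y) ∧ (gRotor n x y ρ : ℤ) = v) ↔
      (m = 0 ∧ Fin.snoc c 0 ∈ Ld n x y) := by
  obtain ⟨hcy, rfl⟩ := hdec
  have hsum (d : Fin (n + 1) → ℕ) : ∑ k, (d k : ℤ) * x ^ (n - k : ℕ) * y ^ (k : ℕ) =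
      wordValue x y (List.ofFn fun k => d k.rev) := by
    rw [← sum_eq_wordValue_ofFn_rev]
    push_cast
    rfl
  rw [snoc_mem_Ld_iff_isLdWord]
  constructor
  · rintro ⟨ρ, hρ, hv⟩
    obtain ⟨W, hW, hlen, hval⟩ := exists_isLdWord_wordValue_eq_arcsValue hxy
      (List.ofFn fun k => ρ k.rev) (by simp [List.mem_ofFn, hρ])
    obtain ⟨c', rfl⟩ := exists_ofFn_rev_eq W (by simpa using hlen)
    obtain ⟨rfl, rfl⟩ := stableDecomp_unique hcop n c c' m 0 hcy
      (fun k => hW.lt hxy _ (List.mem_ofFn.mpr ⟨k.rev, by simp⟩)) (by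
        rw [← hv, hsum, hval, ← gRotor_eq_arcsValue]
        ring)
    exact ⟨rfl, hW⟩
  · rintro ⟨rfl, hW⟩
    obtain ⟨L, hL, hlen, hval⟩ := hW.exists_arcsValue_eq (by omega)
    obtain ⟨ρ, rfl⟩ := exists_ofFn_rev_eq L (by simpa using hlen)
    refine ⟨ρ, fun k => hL _ (List.mem_ofFn.mpr ⟨k.rev, by simp⟩), ?_⟩
    rw [gRotor_eq_arcsValue, hval, hsum]
    ring

/-- Let `v ≥ 0` be an integer. Then `v = g(ρ)` for some rotor
configuration `ρ` of the path multigraph `P^{x,y}_n` if and only if `m(v) = 0`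
and the tuple `(digits(v), 0)` of length `n+2` belongs to `L_d^n`. -/
theorem arcmonic_value_iff
    (n x y : ℕ) (hn : 1 ≤ n) (hx : 0 < x) (hxy : x < y) (hcop : Nat.Coprime x y)
    (v : ℤ) (hv : 0 ≤ v) (c : Fin (n + 1) → ℕ) (m : ℤ)
    (hdec : IsStableDecomp n x y v c m) :
    (∃ ρ : Fin n → ℕ, (∀ k : Fin n, ρ k < x + y) ∧ (gRotor n x y ρ : ℤ) = v) ↔
      (m = 0 ∧ Fin.snoc c 0 ∈ Ld n x y) :=
  arcmonic_value_iff_general n x y hxy hcop v c m hdec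
end

section
/- The cardinality of L_d^n equals F = Σ_{k=0}^n x^(n−k)·y^k. -/
/-!
A word of `L_d^n` is determined by the position `k ≤ n` of its last zero among `c_0, …, c_n`
(every later letter of the first `n + 1` is at least `1`). Once `k` is fixed, the letters are
chosen independently: `y` choices at each of the `k` positions before `k`, `x` choices at each of
the `n - k` positions after it, and the letters at `k` and `n + 1` are `0`. So `L_d^n` is a disjoint
union of `n + 1` boxes of sizes `y ^ k * x ^ (n - k)`.
-/

open Finset

/-- The letters allowed at position `i` of a word of `L_d^n` whose last zero is at position `k`. -/
def ldDigits (n x y k i : ℕ) : Finset ℕ :=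
  if i < k then range y else if k < i ∧ i ≤ n then Icc 1 x else {0}

theorem card_ldDigits (n x y k i : ℕ) :
    #(ldDigits n x y k i) = if i < k then y else if k < i ∧ i ≤ n then x else 1 := by
  unfold ldDigits
  split_ifs <;> simp

theorem prod_card_ldDigits {n k : ℕ} (x y : ℕ) (hk : k ≤ n) :
    ∏ i : Fin (n + 2), #(ldDigits n x y k i) = y ^ k * x ^ (n - k) := by
  simp_rw [card_ldDigits]
  -- split the positions `0, …, n + 1` into `[0, k)`, `k`, `(k, n]` and `n + 1`
  rw [Fin.prod_univ_eq_prod_range (fun i => if i < k then y else if k < i ∧ i ≤ n then x else 1),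
    show n + 2 = k + (n - k + 1) + 1 by omega, prod_range_succ, prod_range_add, prod_range_succ']
  have hpre : ∏ i ∈ range k, (if i < k then y else if k < i ∧ i ≤ n then x else 1) = y ^ k :=
    (prod_congr rfl fun i hi => if_pos (mem_range.1 hi)).trans (by simp)
  have hpost : ∏ j ∈ range (n - k),
      (if k + (j + 1) < k then y else if k < k + (j + 1) ∧ k + (j + 1) ≤ n then x else 1) =
        x ^ (n - k) :=
    (prod_congr rfl fun j hj => by
      have := mem_range.1 hj
      rw [if_neg (by omega), if_pos (by omega)]).trans (by simp)
  rw [hpre, hpost]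
  simp [show ¬k + (n - k + 1) ≤ n by omega]

theorem Ld_eq_biUnion (n x y : ℕ) :
    Ld n x y = ↑(univ.biUnion fun k : Fin (n + 1) =>
      Fintype.piFinset fun i : Fin (n + 2) => ldDigits n x y k i) := by
  ext c
  simp only [Ld, Set.mem_ofPred_eq, coe_biUnion, coe_univ, Set.mem_univ, Set.iUnion_true,
    Set.mem_iUnion, mem_coe, Fintype.mem_piFinset]
  constructor
  · rintro ⟨hlast, k, hpre, hk, hpost⟩
    refine ⟨k, fun i => ?_⟩
    unfold ldDigits
    split_ifs with hlt hmid
    · exact mem_range.2 (hpre i hlt)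
    · exact mem_Icc.2 (hpost i hmid.1 hmid.2)
    · obtain rfl | rfl : i = k.castSucc ∨ i = Fin.last (n + 1) := by
        rw [Fin.ext_iff, Fin.ext_iff, Fin.val_castSucc, Fin.val_last]; omega
      all_goals simp [hk, hlast]
  · rintro ⟨k, hc⟩
    have hkn := k.isLt
    refine ⟨?_, k, fun i hi => ?_, ?_, fun i hlo hhi => ?_⟩
    · simpa [ldDigits, show ¬n + 1 < (k : ℕ) by omega] using hc (Fin.last (n + 1))
    · simpa [ldDigits, hi] using hc i
    · simpa [ldDigits] using hc k.castSucc
    · simpa [ldDigits, hhi, hlo, Nat.not_lt_of_gt hlo] using hc i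

theorem pairwiseDisjoint_piFinset_ldDigits (n x y : ℕ) :
    ((univ : Finset (Fin (n + 1))) : Set (Fin (n + 1))).PairwiseDisjoint fun k =>
      Fintype.piFinset fun i : Fin (n + 2) => ldDigits n x y k i := by
  intro k hk k' hk' hne
  -- the later of the two zero positions carries a letter `≥ 1` in the other box
  wlog hlt : k < k' generalizing k k'
  · exact (this hk' hk hne.symm (lt_of_le_of_ne (not_lt.1 hlt) hne.symm)).symm
  refine disjoint_left.2 fun c hc hc' => ?_
  have h := Fintype.mem_piFinset.1 hc k'.castSucc
  have h' := Fintype.mem_piFinset.1 hc' k'.castSucc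
  simp [ldDigits, Fin.lt_def.1 hlt, Nat.not_lt_of_gt (Fin.lt_def.1 hlt),
    Nat.le_of_lt_succ k'.isLt] at h h'
  omega

theorem card_Ld_general
    (n x y : ℕ) :
    (Ld n x y).ncard = Fval n x y := by
  rw [Ld_eq_biUnion, Set.ncard_coe_finset, card_biUnion (pairwiseDisjoint_piFinset_ldDigits n x y),
    Fval, ← Fin.sum_univ_eq_sum_range (fun k => x ^ (n - k) * y ^ k)]
  refine sum_congr rfl fun k _ => ?_
  rw [Fintype.card_piFinset, prod_card_ldDigits x y (Nat.le_of_lt_succ k.isLt), mul_comm]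

/-- The cardinality of `L_d^n` equals `F = Σ_{k=0}^n x^(n−k)·y^k`. -/
theorem card_Ld
    (n x y : ℕ) (hn : 1 ≤ n) (hx : 0 < x) (hxy : x < y) (hcop : Nat.Coprime x y) :
    (Ld n x y).ncard = Fval n x y :=
  card_Ld_general n x y
end

section
/- There exists a bijection φ : L_a^n → L_d^n such that val(φ(c)) = val(c) for every c ∈ L_a^n. Equivalently: for every a ∈ L_a^n there is a unique d ∈ L_d^n with val(d) = val(a), and every d ∈ L_d^n arises in this way from a unique a ∈ L_a^n. -/
/-!
Read a tuple `(c₀, …, cₙ)` as the list `[c₀, …, cₙ]` with value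
`c₀ xⁿ + y (c₁ xⁿ⁻¹ + y (⋯))`. Since `gcd(x, y) = 1`, a word with all letters `< y` is determined
by its value (its first letter is fixed modulo `y`, then divide by `y`), so the value is injective
on `L_d`. The heart of the proof is that `L_a` and `L_d` have the same multiset of values. Splitting
off the first letter, this follows by induction on the length from the carry rule
`(c + y) xᵐ + y v = c xᵐ + y (xᵐ + v)` and the auxiliary identity `(xᵐ + D) + P = D + Q` between
the value multisets `D`, `P`, `Q` of `L_d`, `[0, x-1]ᵐ` and `[1, x]ᵐ`. Equality of multisets,
with no repetition on the `L_d` side, makes the value injective on `L_a` with the same image.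
-/

theorem Set.InjOn.exists_bijective_of_image_eq {α β γ : Type*} {s : Set α} {t : Set β}
    {f : α → γ} {g : β → γ} (hf : s.InjOn f) (hg : t.InjOn g) (h : f '' s = g '' t) :
    ∃ φ : s → t, Function.Bijective φ ∧ ∀ a, g (φ a) = f a := by
  let e : s ≃ t :=
    (hf.bijOn_image.equiv f).trans ((Equiv.setCongr h).trans (hg.bijOn_image.equiv g).symm)
  exact ⟨e, e.bijective, fun a => congrArg Subtype.val
    ((hg.bijOn_image.equiv g).apply_symm_apply ⟨f a, h ▸ Set.mem_image_of_mem f a.2⟩)⟩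

namespace DigitWords

open Finset

variable (x y : ℕ)

def wordVal : List ℕ → ℕ
  | [] => 0
  | c :: t => c * x ^ t.length + y * wordVal t

def consAll (S : Finset ℕ) (W : Multiset (List ℕ)) : Multiset (List ℕ) :=
  ∑ c ∈ S, W.map (c :: ·)

def words (S : Finset ℕ) : ℕ → Multiset (List ℕ)
  | 0 => {[]}
  | m + 1 => consAll S (words S m)

def IsZeroSplit (P Q : ℕ → Prop) (l : List ℕ) : Prop :=
  ∃ p s, l = p ++ 0 :: s ∧ (∀ d ∈ p, P d) ∧ ∀ d ∈ s, Q d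

def zeroSplitWords (S T : Finset ℕ) : ℕ → Multiset (List ℕ)
  | 0 => 0
  | m + 1 => consAll S (zeroSplitWords S T m) + (words T m).map (0 :: ·)

variable {x y}

section Membership

variable {S T : Finset ℕ} {W : Multiset (List ℕ)}

@[simp] lemma nil_notMem_consAll : [] ∉ consAll S W := by
  simp [consAll, Multiset.mem_sum]

@[simp] lemma cons_mem_consAll {c : ℕ} {t : List ℕ} : c :: t ∈ consAll S W ↔ c ∈ S ∧ t ∈ W := by
  simp [consAll, Multiset.mem_sum]

lemma nodup_consAll (hW : W.Nodup) : (consAll S W).Nodup := by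
  refine Multiset.nodup_bind.2 ⟨fun c _ => hW.map List.cons_injective, ?_⟩
  refine Multiset.Nodup.pairwise (fun c _ c' _ hcc' => ?_) S.nodup
  simp only [Function.onFun, Multiset.disjoint_left, Multiset.mem_map]
  rintro _ ⟨t, -, rfl⟩ ⟨t', -, h⟩
  exact hcc' (List.cons.inj h).1.symm

lemma mem_words {m : ℕ} {l : List ℕ} : l ∈ words S m ↔ l.length = m ∧ ∀ d ∈ l, d ∈ S := by
  induction m generalizing l with
  | zero =>
    simp only [words, Multiset.mem_singleton, List.length_eq_zero_iff, iff_self_and]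
    rintro rfl; simp
  | succ m ih =>
    cases l with
    | nil => simp [words]
    | cons c t => simp [words, ih, and_left_comm]

lemma nodup_words {m : ℕ} : (words S m).Nodup := by
  induction m with
  | zero => exact Multiset.nodup_singleton _
  | succ m ih => exact nodup_consAll ih

lemma not_isZeroSplit_nil {P Q : ℕ → Prop} : ¬ IsZeroSplit P Q [] := by
  rintro ⟨p, s, h, -⟩
  simp at h

lemma isZeroSplit_cons {P Q : ℕ → Prop} {c : ℕ} {t : List ℕ} :
    IsZeroSplit P Q (c :: t) ↔ (c = 0 ∧ ∀ d ∈ t, Q d) ∨ (P c ∧ IsZeroSplit P Q t) := by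
  constructor
  · rintro ⟨_ | ⟨a, p⟩, s, h, hp, hs⟩ <;> simp only [List.nil_append, List.cons_append,
      List.cons.injEq] at h <;> obtain ⟨rfl, rfl⟩ := h
    · exact .inl ⟨rfl, hs⟩
    · exact .inr ⟨hp _ List.mem_cons_self, p, s, rfl, fun d hd => hp d (.tail _ hd), hs⟩
  · rintro (⟨rfl, hs⟩ | ⟨hc, p, s, rfl, hp, hs⟩)
    · exact ⟨[], t, rfl, by simp, hs⟩
    · exact ⟨c :: p, s, rfl, by simpa [hc] using hp, hs⟩

lemma zero_mem_of_isZeroSplit {P Q : ℕ → Prop} {l : List ℕ} (h : IsZeroSplit P Q l) : 0 ∈ l := by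
  obtain ⟨p, s, rfl, -⟩ := h
  simp

lemma IsZeroSplit.forall_mem {P Q R : ℕ → Prop} {l : List ℕ} (h : IsZeroSplit P Q l)
    (hP : ∀ d, P d → R d) (h0 : R 0) (hQ : ∀ d, Q d → R d) : ∀ d ∈ l, R d := by
  obtain ⟨p, s, rfl, hp, hs⟩ := h
  simp only [List.mem_append, List.mem_cons]
  rintro d ((hd | rfl | hd))
  exacts [hP d (hp d hd), h0, hQ d (hs d hd)]

lemma mem_zeroSplitWords {m : ℕ} {l : List ℕ} :
    l ∈ zeroSplitWords S T m ↔ l.length = m ∧ IsZeroSplit (· ∈ S) (· ∈ T) l := by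
  induction m generalizing l with
  | zero =>
    simp only [zeroSplitWords, Multiset.notMem_zero, false_iff, not_and, List.length_eq_zero_iff]
    rintro rfl; exact not_isZeroSplit_nil
  | succ m ih =>
    cases l with
    | nil => simp [zeroSplitWords, not_isZeroSplit_nil]
    | cons c t =>
      simp only [zeroSplitWords, Multiset.mem_add, cons_mem_consAll, ih, Multiset.mem_map,
        mem_words, List.cons.injEq, isZeroSplit_cons, List.length_cons]
      grind

lemma nodup_zeroSplitWords (h0 : 0 ∉ T) {m : ℕ} : (zeroSplitWords S T m).Nodup := by
  induction m with
  | zero => exact Multiset.nodup_zero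
  | succ m ih =>
    refine Multiset.nodup_add.2 ⟨nodup_consAll ih, nodup_words.map List.cons_injective, ?_⟩
    simp only [Multiset.disjoint_left, Multiset.mem_map]
    rintro _ h ⟨t, ht, rfl⟩
    rw [cons_mem_consAll, mem_zeroSplitWords] at h
    exact h0 (mem_words.1 ht |>.2 0 (zero_mem_of_isZeroSplit h.2.2))

end Membership

section Values

variable (x y) in
def prependDigit (m c : ℕ) (V : Multiset ℕ) : Multiset ℕ := V.map (c * x ^ m + y * ·)

variable {S T : Finset ℕ} {W : Multiset (List ℕ)}

lemma prependDigit_add {m c : ℕ} (V V' : Multiset ℕ) :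
    prependDigit x y m c (V + V') = prependDigit x y m c V + prependDigit x y m c V' :=
  Multiset.map_add _ _ _

lemma map_pow_succ_add_prependDigit {m c : ℕ} (V : Multiset ℕ) :
    (prependDigit x y m c V).map (x ^ (m + 1) + ·) = prependDigit x y m (c + x) V := by
  simp only [prependDigit, Multiset.map_map]
  exact Multiset.map_congr rfl fun v _ => by simp only [Function.comp_apply]; ring

lemma prependDigit_carry {m c : ℕ} (V : Multiset ℕ) :
    prependDigit x y m (c + y) V = prependDigit x y m c (V.map (x ^ m + ·)) := by
  simp only [prependDigit, Multiset.map_map]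
  exact Multiset.map_congr rfl fun v _ => by simp only [Function.comp_apply]; ring

lemma map_sum_prependDigit {m : ℕ} (V : Multiset ℕ) :
    (∑ c ∈ S, prependDigit x y m c V).map (x ^ (m + 1) + ·) =
      ∑ c ∈ S, prependDigit x y m (c + x) V := by
  simp only [← Multiset.coe_mapAddMonoidHom, map_sum]
  exact Finset.sum_congr rfl fun c _ => map_pow_succ_add_prependDigit _

lemma sum_prependDigit_add {m : ℕ} (V V' : Multiset ℕ) :
    ∑ c ∈ S, prependDigit x y m c V + ∑ c ∈ S, prependDigit x y m c V' =
      ∑ c ∈ S, prependDigit x y m c (V + V') := by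
  simp only [prependDigit_add, Finset.sum_add_distrib]

lemma map_wordVal_consAll {m : ℕ} (hW : ∀ w ∈ W, w.length = m) :
    (consAll S W).map (wordVal x y) = ∑ c ∈ S, prependDigit x y m c (W.map (wordVal x y)) := by
  simp only [consAll, ← Multiset.coe_mapAddMonoidHom, map_sum]
  refine Finset.sum_congr rfl fun c _ => ?_
  simp only [Multiset.coe_mapAddMonoidHom, prependDigit, Multiset.map_map]
  exact Multiset.map_congr rfl fun w hw => by simp [wordVal, hW w hw]

lemma map_wordVal_words_succ {m : ℕ} :
    (words S (m + 1)).map (wordVal x y) =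
      ∑ c ∈ S, prependDigit x y m c ((words S m).map (wordVal x y)) :=
  map_wordVal_consAll fun _ hw => (mem_words.1 hw).1

lemma map_wordVal_zeroSplitWords_succ {m : ℕ} :
    (zeroSplitWords S T (m + 1)).map (wordVal x y) =
      ∑ c ∈ S, prependDigit x y m c ((zeroSplitWords S T m).map (wordVal x y)) +
        prependDigit x y m 0 ((words T m).map (wordVal x y)) := by
  rw [zeroSplitWords, Multiset.map_add,
    map_wordVal_consAll fun _ hw => (mem_zeroSplitWords.1 hw).1, Multiset.map_map]
  congr 1
  simp only [prependDigit, Multiset.map_map]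
  exact Multiset.map_congr rfl fun w hw => by simp [wordVal, (mem_words.1 hw).1]

end Values

variable (x y) in
abbrev aWords (m : ℕ) : Multiset (List ℕ) := zeroSplitWords (Icc 1 y) (range x) m

variable (x y) in
abbrev dWords (m : ℕ) : Multiset (List ℕ) := zeroSplitWords (range y) (Icc 1 x) m

theorem map_add_pow_dWords_add_words (hxy : x ≤ y) (m : ℕ) :
    ((dWords x y m).map (wordVal x y)).map (x ^ m + ·) + (words (range x) m).map (wordVal x y) =
      (dWords x y m).map (wordVal x y) + (words (Icc 1 x) m).map (wordVal x y) := by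
  induction m with
  | zero => simp [zeroSplitWords, words, wordVal]
  | succ m ih =>
    simp only [dWords, map_wordVal_zeroSplitWords_succ, map_wordVal_words_succ]
    set G := (dWords x y m).map (wordVal x y)
    set P := (words (range x) m).map (wordVal x y)
    set Q := (words (Icc 1 x) m).map (wordVal x y)
    have hsplit := Finset.sum_range_add (fun c => prependDigit x y m (c + x) G) (y - x) x
    rw [Nat.sub_add_cancel hxy] at hsplit
    have hcarry : ∑ c ∈ range x, prependDigit x y m (y - x + c + x) G =
        ∑ c ∈ range x, prependDigit x y m c (G.map (x ^ m + ·)) :=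
      Finset.sum_congr rfl fun c _ => by rw [← prependDigit_carry]; congr 1; omega
    have hlow : ∑ c ∈ range y, prependDigit x y m c G =
        ∑ c ∈ range x, prependDigit x y m c G + ∑ c ∈ range (y - x), prependDigit x y m (c + x) G := by
      rw [← Nat.add_sub_cancel' hxy, Finset.sum_range_add, Nat.add_sub_cancel_left]
      simp only [add_comm x]
    have htop : prependDigit x y m 0 Q + ∑ c ∈ Icc 1 x, prependDigit x y m c Q =
        ∑ c ∈ range x, prependDigit x y m c Q + prependDigit x y m x Q := by
      rw [← Finset.sum_range_succ, Finset.sum_range_succ', ← Finset.Ico_add_one_right_eq_Icc,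
        Finset.sum_Ico_eq_sum_range, add_comm]
      simp only [add_comm 1, Nat.add_sub_cancel]
    -- Shifting by `x^(m+1)` raises each first digit `c` by `x`; when `c + x ≥ y` the excess
    -- carries into the tail as a shift by `x^m`, where the induction hypothesis applies.
    calc _ = ∑ c ∈ range (y - x), prependDigit x y m (c + x) G + prependDigit x y m x Q +
          ∑ c ∈ range x, prependDigit x y m c (G.map (x ^ m + ·) + P) := by
          rw [Multiset.map_add, map_sum_prependDigit, map_pow_succ_add_prependDigit, hsplit,
            hcarry, ← sum_prependDigit_add, zero_add]
          abel
      _ = _ := by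
        rw [ih, ← sum_prependDigit_add, add_assoc _ (prependDigit x y m 0 Q), htop, hlow]
        abel

theorem map_wordVal_aWords_eq_dWords (hxy : x < y) (m : ℕ) :
    (aWords x y m).map (wordVal x y) = (dWords x y m).map (wordVal x y) := by
  induction m with
  | zero => rfl
  | succ m ih =>
    simp only [aWords, dWords, map_wordVal_zeroSplitWords_succ] at ih ⊢
    rw [ih]
    set G := (dWords x y m).map (wordVal x y)
    have hy : 0 < y := by omega
    have hcarry : prependDigit x y m y G = prependDigit x y m 0 (G.map (x ^ m + ·)) := by
      simpa using prependDigit_carry (x := x) (y := y) (m := m) (c := 0) G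
    calc _ = ∑ c ∈ Ico 1 y, prependDigit x y m c G +
          prependDigit x y m 0 (G.map (x ^ m + ·) + (words (range x) m).map (wordVal x y)) := by
          rw [← Finset.Ico_add_one_right_eq_Icc, Finset.sum_Ico_succ_top hy, hcarry,
            prependDigit_add, add_assoc]
      _ = _ := by
        rw [map_add_pow_dWords_add_words hxy.le, prependDigit_add, Finset.range_eq_Ico,
          Finset.sum_eq_sum_Ico_succ_bot hy]
        abel

lemma eq_and_eq_of_mul_pow_add_mul_eq (hcop : Nat.Coprime x y) {k c c' t t' : ℕ} (hc : c < y)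
    (hc' : c' < y) (h : c * x ^ k + y * t = c' * x ^ k + y * t') : c = c' ∧ t = t' := by
  have hmod : c * x ^ k ≡ c' * x ^ k [MOD y] := by
    simpa [Nat.ModEq, Nat.add_mul_mod_self_left] using congrArg (· % y) h
  obtain rfl : c = c' :=
    (hmod.cancel_right_of_coprime (Nat.Coprime.pow_left k hcop).symm).eq_of_lt_of_lt hc hc'
  exact ⟨rfl, Nat.eq_of_mul_eq_mul_left (by omega) (Nat.add_left_cancel h)⟩

lemma wordVal_injOn_digits_lt (hcop : Nat.Coprime x y) (m : ℕ) :
    Set.InjOn (wordVal x y) {l | l.length = m ∧ ∀ d ∈ l, d < y} := by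
  induction m with
  | zero =>
    rintro l ⟨hl, -⟩ l' ⟨hl', -⟩ -
    rw [List.length_eq_zero_iff.1 hl, List.length_eq_zero_iff.1 hl']
  | succ m ih =>
    rintro l ⟨hl, hd⟩ l' ⟨hl', hd'⟩ h
    obtain ⟨c, t, rfl⟩ := List.exists_cons_of_length_eq_add_one hl
    obtain ⟨c', t', rfl⟩ := List.exists_cons_of_length_eq_add_one hl'
    simp only [List.length_cons, Nat.add_right_cancel_iff, List.forall_mem_cons] at hl hl' hd hd'
    simp only [wordVal, hl, hl'] at h
    obtain ⟨rfl, ht⟩ := eq_and_eq_of_mul_pow_add_mul_eq hcop hd.1 hd'.1 h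
    rw [ih ⟨hl, hd.2⟩ ⟨hl', hd'.2⟩ ht]

theorem nodup_map_wordVal_dWords (hxy : x < y) (hcop : Nat.Coprime x y) (m : ℕ) :
    ((dWords x y m).map (wordVal x y)).Nodup := by
  have hdigits {l} (hl : l ∈ dWords x y m) : l ∈ {l : List ℕ | l.length = m ∧ ∀ d ∈ l, d < y} := by
    obtain ⟨hlen, hsplit⟩ := mem_zeroSplitWords.1 hl
    exact ⟨hlen, hsplit.forall_mem (by simp) (by omega) (by simp; omega)⟩
  exact (nodup_zeroSplitWords (by simp)).map_on fun l hl l' hl' h =>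
    wordVal_injOn_digits_lt hcop m (hdigits hl) (hdigits hl') h

lemma isZeroSplit_iff_getElem {P Q : ℕ → Prop} {l : List ℕ} :
    IsZeroSplit P Q l ↔ ∃ k, ∃ hk : k < l.length,
      (∀ i (hi : i < k), P l[i]) ∧ l[k] = 0 ∧ ∀ i (hi : i < l.length), k < i → Q l[i] := by
  constructor
  · rintro ⟨p, s, rfl, hp, hs⟩
    refine ⟨p.length, by simp, fun i hi => ?_, by simp, fun i hi hki => ?_⟩
    · rw [List.getElem_append_left hi]
      exact hp _ (List.getElem_mem _)
    · rw [List.getElem_append_right (by omega), List.getElem_cons, dif_neg (by omega)]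
      exact hs _ (List.getElem_mem _)
  · rintro ⟨k, hk, hp, h0, hs⟩
    refine ⟨l.take k, l.drop (k + 1), ?_, fun d hd => ?_, fun d hd => ?_⟩
    · rw [← h0, ← List.drop_eq_getElem_cons hk, List.take_append_drop]
    · obtain ⟨j, hj, rfl⟩ := List.mem_take_iff_getElem.1 hd
      exact hp j (by omega)
    · obtain ⟨j, hj, rfl⟩ := List.mem_drop_iff_getElem.1 hd
      exact hs _ (by omega) (by omega)

lemma wordVal_ofFn {m : ℕ} (f : Fin m → ℕ) :
    wordVal x y (List.ofFn f) = ∑ i : Fin m, f i * x ^ (m - 1 - i) * y ^ (i : ℕ) := by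
  induction m with
  | zero => rfl
  | succ m ih =>
    rw [List.ofFn_succ, wordVal, ih, Fin.sum_univ_succ, Finset.mul_sum, List.length_ofFn]
    congr 1
    · simp
    refine Finset.sum_congr rfl fun i _ => ?_
    rw [Fin.val_succ, pow_succ', show m + 1 - 1 - (i + 1) = m - 1 - i by omega]
    ring

lemma tupleVal_eq_wordVal_comp {n : ℕ} :
    tupleVal n x y = wordVal x y ∘ fun c : Fin (n + 2) → ℕ => List.ofFn (Fin.init c) := by
  ext c
  rw [tupleVal, Function.comp_apply, wordVal_ofFn]
  simp only [Fin.init, Nat.add_sub_cancel]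

lemma exists_zero_index_iff_isZeroSplit {P Q : ℕ → Prop} {n : ℕ} (c : Fin (n + 2) → ℕ) :
    (∃ k : Fin (n + 1), (∀ i : Fin (n + 2), (i : ℕ) < k → P (c i)) ∧ c k.castSucc = 0 ∧
      ∀ i : Fin (n + 2), (k : ℕ) < i → (i : ℕ) ≤ n → Q (c i)) ↔
      IsZeroSplit P Q (List.ofFn (Fin.init c)) := by
  simp only [isZeroSplit_iff_getElem, Fin.exists_iff, Fin.forall_iff, List.length_ofFn,
    List.getElem_ofFn, Fin.init, Fin.castSucc_mk]
  constructor <;> rintro ⟨k, hk, hp, h0, hq⟩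
  · exact ⟨k, hk, fun i hi => hp i (by omega) hi, h0, fun i hi hki => hq i (by omega) hki (by omega)⟩
  · exact ⟨k, hk, fun i _ hi => hp i hi, h0, fun i _ hki hin => hq i (by omega) hki⟩

lemma La_eq (n x y : ℕ) :
    La n x y = {c | c (Fin.last _) = 0 ∧ List.ofFn (Fin.init c) ∈ aWords x y (n + 1)} := by
  ext c
  refine and_congr_right fun _ =>
    (exists_zero_index_iff_isZeroSplit (P := fun d => 1 ≤ d ∧ d ≤ y) (Q := (· < x)) c).trans ?_
  simp [mem_zeroSplitWords]

lemma Ld_eq (n x y : ℕ) :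
    Ld n x y = {c | c (Fin.last _) = 0 ∧ List.ofFn (Fin.init c) ∈ dWords x y (n + 1)} := by
  ext c
  refine and_congr_right fun _ =>
    (exists_zero_index_iff_isZeroSplit (P := (· < y)) (Q := fun d => 1 ≤ d ∧ d ≤ x) c).trans ?_
  simp [mem_zeroSplitWords]

section Tuples

variable {n : ℕ} {W : Multiset (List ℕ)}

lemma injOn_ofFn_init :
    Set.InjOn (fun c : Fin (n + 2) → ℕ => List.ofFn (Fin.init c)) {c | c (Fin.last _) = 0} := by
  intro c hc c' hc' h
  rw [← Fin.snoc_init_self c, ← Fin.snoc_init_self c', show c (Fin.last _) = 0 from hc,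
    show c' (Fin.last _) = 0 from hc', List.ofFn_injective h]

lemma image_ofFn_init (hW : ∀ l ∈ W, l.length = n + 1) :
    (fun c : Fin (n + 2) → ℕ => List.ofFn (Fin.init c)) ''
      {c | c (Fin.last _) = 0 ∧ List.ofFn (Fin.init c) ∈ W} = {l | l ∈ W} := by
  ext l
  refine ⟨fun ⟨c, ⟨_, hc⟩, hl⟩ => hl ▸ hc, fun hl => ?_⟩
  have hlen := hW l hl
  have hofFn : List.ofFn (fun i : Fin (n + 1) => l[(i : ℕ)]) = l :=
    List.ext_getElem (by simp [hlen]) fun i _ _ => List.getElem_ofFn _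
  refine ⟨Fin.snoc (fun i : Fin (n + 1) => l[(i : ℕ)]) 0, ⟨Fin.snoc_last _ _, ?_⟩, ?_⟩ <;>
    simp only [Fin.init_snoc, hofFn]
  exact hl

lemma image_tupleVal (hW : ∀ l ∈ W, l.length = n + 1) :
    tupleVal n x y '' {c | c (Fin.last _) = 0 ∧ List.ofFn (Fin.init c) ∈ W} =
      {v | v ∈ W.map (wordVal x y)} := by
  rw [tupleVal_eq_wordVal_comp, Set.image_comp, image_ofFn_init hW]
  ext v
  simp [Multiset.mem_map]

lemma injOn_tupleVal (hnodup : (W.map (wordVal x y)).Nodup) :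
    Set.InjOn (tupleVal n x y) {c | c (Fin.last _) = 0 ∧ List.ofFn (Fin.init c) ∈ W} := by
  rw [tupleVal_eq_wordVal_comp]
  exact Set.InjOn.comp (fun l hl l' hl' => Multiset.inj_on_of_nodup_map hnodup l hl l' hl')
    (injOn_ofFn_init.mono fun c hc => hc.1) fun c hc => hc.2

end Tuples

end DigitWords

theorem exists_val_preserving_bijection_general
    (n x y : ℕ) (hxy : x < y) (hcop : Nat.Coprime x y) :
    ∃ φ : ↥(La n x y) → ↥(Ld n x y), Function.Bijective φ ∧
      ∀ a : ↥(La n x y), tupleVal n x y (φ a).val = tupleVal n x y a.val := by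
  have hvals := DigitWords.map_wordVal_aWords_eq_dWords hxy (n + 1)
  have hnodup := DigitWords.nodup_map_wordVal_dWords hxy hcop (n + 1)
  have hlen {S T : Finset ℕ} (l) (hl : l ∈ DigitWords.zeroSplitWords S T (n + 1)) :
      l.length = n + 1 :=
    (DigitWords.mem_zeroSplitWords.1 hl).1
  rw [DigitWords.La_eq, DigitWords.Ld_eq]
  refine Set.InjOn.exists_bijective_of_image_eq (DigitWords.injOn_tupleVal (hvals ▸ hnodup))
    (DigitWords.injOn_tupleVal hnodup) ?_
  rw [DigitWords.image_tupleVal hlen, DigitWords.image_tupleVal hlen, hvals]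

/-- There exists a bijection `φ : L_a^n → L_d^n` with
`val(φ(c)) = val(c)` for every `c ∈ L_a^n`. -/
theorem exists_val_preserving_bijection
    (n x y : ℕ) (hn : 1 ≤ n) (hx : 0 < x) (hxy : x < y) (hcop : Nat.Coprime x y) :
    ∃ φ : ↥(La n x y) → ↥(Ld n x y), Function.Bijective φ ∧
      ∀ a : ↥(La n x y), tupleVal n x y (φ a).val = tupleVal n x y a.val :=
  exists_val_preserving_bijection_general n x y hxy hcop
end

section
/- The value map val is injective on L_a^n: if a, a' ∈ L_a^n and val(a) = val(a'), then a = a'. -/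
/-!
Read `val` as a mixed-radix numeral `∑ cᵢ xᵐ⁻¹⁻ⁱ yⁱ`. Modulo `y` only the leading term `c₀ xᵐ⁻¹`
survives, and `x` is invertible mod `y`, so the leading digits agree mod `y`. Digits lie in
`[0, y]`, hence they are equal unless one is `y` and the other `0`. In that case dividing by `y`
gives `xᵐ⁻¹ + val(tail c) = val(tail c')` where every digit of `tail c'` is `< x` (they follow a
zero); the same reasoning mod `y` forces the leading digits to satisfy `x + d = y + d'` and
reproduces the equation one digit shorter, down to the impossible `1 = 0`.
-/

open Finset

def mixedVal (x y : ℕ) {m : ℕ} (c : Fin m → ℕ) : ℕ :=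
  ∑ i : Fin m, c i * x ^ (m - 1 - i) * y ^ (i : ℕ)

def SmallAfterZero (x : ℕ) {m : ℕ} (c : Fin m → ℕ) : Prop :=
  ∀ j i, j < i → c j = 0 → c i < x

theorem Nat.ModEq.eq_add_of_lt_of_lt_add {y a b : ℕ} (h : a ≡ b [MOD y]) (hba : b < a)
    (hab : a < b + 2 * y) : a = b + y := by
  have hdvd : y ∣ a - b := (Nat.modEq_iff_dvd' hba.le).mp h.symm
  have := Nat.eq_of_dvd_of_lt_two_mul (by omega) hdvd (by omega)
  omega

theorem modEq_of_mul_pow_add_mul_eq {x y a b m S T : ℕ} (hcop : Nat.Coprime x y)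
    (h : a * x ^ m + y * S = b * x ^ m + y * T) : a ≡ b [MOD y] := by
  have hpow : a * x ^ m ≡ b * x ^ m [MOD y] := by
    unfold Nat.ModEq
    simpa only [Nat.add_mul_mod_self_left] using congrArg (· % y) h
  exact hpow.cancel_right_of_coprime (Nat.Coprime.pow_right m hcop.symm)

section mixedVal

variable {x y : ℕ}

theorem mixedVal_succ {m : ℕ} (c : Fin (m + 1) → ℕ) :
    mixedVal x y c = c 0 * x ^ m + y * mixedVal x y (Fin.tail c) := by
  rw [mixedVal, mixedVal, Fin.sum_univ_succ, mul_sum]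
  congr 1
  · simp
  · refine sum_congr rfl fun i _ => ?_
    rw [show m + 1 - 1 - (i.succ : ℕ) = m - 1 - i by simp; omega, Fin.val_succ, pow_succ]
    simp only [Fin.tail]
    ring

theorem SmallAfterZero.tail {m : ℕ} {c : Fin (m + 1) → ℕ} (hc : SmallAfterZero x c) :
    SmallAfterZero x (Fin.tail c) :=
  fun j i hji hj => hc j.succ i.succ (Fin.succ_lt_succ_iff.mpr hji) hj

theorem pow_add_mixedVal_ne (hcop : Nat.Coprime x y) (hxy : x < y) :
    ∀ {m : ℕ} {c c' : Fin m → ℕ}, (∀ i, c i ≤ y) → (∀ i, c' i < x) →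
      x ^ m + mixedVal x y c ≠ mixedVal x y c'
  | 0, _, _, _, _, h => by simp [mixedVal] at h
  | m + 1, c, c', hc, hc', h => by
    rw [mixedVal_succ, mixedVal_succ, ← add_assoc, pow_succ', ← add_mul] at h
    have hmod := modEq_of_mul_pow_add_mul_eq hcop h
    have hlead : x + c 0 = c' 0 + y :=
      hmod.eq_add_of_lt_of_lt_add (by linarith [hc' 0]) (by linarith [hc 0])
    rw [hlead, add_mul, add_assoc, ← mul_add] at h
    exact pow_add_mixedVal_ne hcop hxy (fun i => hc i.succ) (fun i => hc' i.succ)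
      (Nat.eq_of_mul_eq_mul_left (by omega) (Nat.add_left_cancel h))

theorem mixedVal_ne_of_head_lt (hcop : Nat.Coprime x y) (hxy : x < y) {m : ℕ}
    {c c' : Fin (m + 1) → ℕ} (hc : ∀ i, c i ≤ y) (hc' : SmallAfterZero x c')
    (hlt : c' 0 < c 0) : mixedVal x y c ≠ mixedVal x y c' := by
  intro h
  rw [mixedVal_succ, mixedVal_succ] at h
  have hlead : c 0 = c' 0 + y :=
    (modEq_of_mul_pow_add_mul_eq hcop h).eq_add_of_lt_of_lt_add hlt (by linarith [hc 0])
  have hzero : c' 0 = 0 := by linarith [hc 0]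
  rw [hlead, hzero, zero_add, zero_mul, zero_add, ← mul_add] at h
  exact pow_add_mixedVal_ne hcop hxy (fun i => hc i.succ)
    (fun i => hc' 0 i.succ (Fin.succ_pos i) hzero)
    (Nat.eq_of_mul_eq_mul_left (by omega) h)

theorem mixedVal_injective_of_smallAfterZero (hcop : Nat.Coprime x y) (hxy : x < y) :
    ∀ {m : ℕ} {c c' : Fin m → ℕ}, (∀ i, c i ≤ y) → (∀ i, c' i ≤ y) →
      SmallAfterZero x c → SmallAfterZero x c' → mixedVal x y c = mixedVal x y c' → c = c'
  | 0, _, _, _, _, _, _, _ => Subsingleton.elim _ _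
  | m + 1, c, c', hc, hc', hsc, hsc', h => by
    obtain hlt | hhead | hgt := lt_trichotomy (c 0) (c' 0)
    · exact absurd h.symm (mixedVal_ne_of_head_lt hcop hxy hc' hsc hlt)
    · have htail : mixedVal x y (Fin.tail c) = mixedVal x y (Fin.tail c') := by
        rw [mixedVal_succ, mixedVal_succ, hhead] at h
        exact Nat.eq_of_mul_eq_mul_left (by omega) (Nat.add_left_cancel h)
      rw [← Fin.cons_self_tail c, ← Fin.cons_self_tail c', hhead]
      exact congrArg _ (mixedVal_injective_of_smallAfterZero hcop hxy (fun i => hc i.succ)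
        (fun i => hc' i.succ) hsc.tail hsc'.tail htail)
    · exact absurd h (mixedVal_ne_of_head_lt hcop hxy hc hsc' hgt)

end mixedVal

section La

variable {n x y : ℕ} {a : Fin (n + 2) → ℕ}

theorem tupleVal_eq_mixedVal_init : tupleVal n x y a = mixedVal x y (Fin.init a) := rfl

theorem init_le_of_mem_La (ha : a ∈ La n x y) (hxy : x ≤ y) (i : Fin (n + 1)) :
    Fin.init a i ≤ y := by
  obtain ⟨-, k, hpre, hzero, hpost⟩ := ha
  obtain hik | rfl | hki := lt_trichotomy i k
  · exact (hpre _ hik).2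
  · simp [Fin.init, hzero]
  · exact (hpost _ hki (Nat.lt_succ_iff.mp i.isLt)).le.trans hxy

theorem smallAfterZero_init_of_mem_La (ha : a ∈ La n x y) : SmallAfterZero x (Fin.init a) := by
  obtain ⟨-, k, hpre, -, hpost⟩ := ha
  intro j i hji hj
  have hkj : (k : ℕ) ≤ j := by
    by_contra! hjk
    have := (hpre j.castSucc hjk).1
    simp_all [Fin.init]
  exact hpost i.castSucc (by simp; omega) (Nat.lt_succ_iff.mp i.isLt)

end La

theorem val_injective_on_La_general
    (n x y : ℕ) (hxy : x < y) (hcop : Nat.Coprime x y)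
    (a a' : Fin (n + 2) → ℕ) (ha : a ∈ La n x y) (ha' : a' ∈ La n x y)
    (hval : tupleVal n x y a = tupleVal n x y a') : a = a' := by
  have hinit : Fin.init a = Fin.init a' :=
    mixedVal_injective_of_smallAfterZero hcop hxy (init_le_of_mem_La ha hxy.le)
      (init_le_of_mem_La ha' hxy.le) (smallAfterZero_init_of_mem_La ha)
      (smallAfterZero_init_of_mem_La ha') (by simpa only [tupleVal_eq_mixedVal_init] using hval)
  ext i
  induction i using Fin.lastCases with
  | last => rw [ha.1, ha'.1]
  | cast i => exact congrFun hinit i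

/-- The value map `val` is injective on `L_a^n`. -/
theorem val_injective_on_La
    (n x y : ℕ) (hn : 1 ≤ n) (hx : 0 < x) (hxy : x < y) (hcop : Nat.Coprime x y)
    (a a' : Fin (n + 2) → ℕ) (ha : a ∈ La n x y) (ha' : a' ∈ La n x y)
    (hval : tupleVal n x y a = tupleVal n x y a') : a = a' :=
  val_injective_on_La_general n x y hxy hcop a a' ha ha' hval
end

section
/- For all integers v, w ≥ 0, the overflow coefficient of the stable decomposition is superadditive: m(v + w) ≥ m(v) + m(w). -/
/-! Adding the digit tuples of `v` and `w` place by place represents `v + w` up to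
`(m(v) + m(w)) * y ^ (n + 1)`, with coefficients that may exceed `y - 1`. Carrying restores
digits and only adds a nonnegative multiple of `y ^ (n + 1)`: a carry of `q` out of place `k`
becomes `q * x` at place `k + 1`, because
`y * x ^ (n - k) * y ^ k = x * x ^ (n - k - 1) * y ^ (k + 1)`.
Since `x` is coprime to `y`, distinct digit tuples stay distinct modulo `y ^ (n + 1)` (cancel `x`
below the top place, then compare the top digits), so the carried tuple is the stable
decomposition of `v + w` and `m(v + w) - m(v) - m(w)` is the final overflow. -/

def digitVal (n x y : ℕ) (c : Fin (n + 1) → ℕ) : ℤ :=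
  ∑ k : Fin (n + 1), (c k : ℤ) * (x : ℤ) ^ (n - (k : ℕ)) * (y : ℤ) ^ (k : ℕ)

lemma Nat.eq_of_intCast_dvd_sub {a b y : ℕ} (ha : a < y) (hb : b < y) (h : (y : ℤ) ∣ a - b) :
    a = b :=
  (Int.natCast_modEq_iff.mp (Int.modEq_iff_dvd.mpr h)).eq_of_lt_of_lt hb ha |>.symm

namespace digitVal
variable {n x y : ℕ}

@[simp] lemma zero (c : Fin 1 → ℕ) : digitVal 0 x y c = c 0 := by
  simp [digitVal]

lemma succ (c : Fin (n + 2) → ℕ) :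
    digitVal (n + 1) x y c = x * digitVal n x y (Fin.init c) + c (Fin.last _) * y ^ (n + 1) := by
  rw [digitVal, Fin.sum_univ_castSucc, digitVal, Finset.mul_sum]
  congr 1
  · refine Finset.sum_congr rfl fun k _ => ?_
    rw [Fin.val_castSucc, Nat.sub_add_comm (Nat.le_of_lt_succ k.isLt), pow_succ]
    simp only [Fin.init]
    ring
  · simp

lemma add (c d : Fin (n + 1) → ℕ) :
    digitVal n x y (c + d) = digitVal n x y c + digitVal n x y d := by
  simp only [digitVal, ← Finset.sum_add_distrib, Pi.add_apply, Nat.cast_add, add_mul]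

lemma exists_digits_add (hy : 0 < y) (a : Fin (n + 1) → ℕ) :
    ∃ f : Fin (n + 1) → ℕ, (∀ k, f k < y) ∧
      ∃ ε : ℕ, digitVal n x y a = digitVal n x y f + ε * y ^ (n + 1) := by
  induction n with
  | zero =>
    refine ⟨fun _ => a 0 % y, fun _ => Nat.mod_lt _ hy, a 0 / y, ?_⟩
    simp only [zero, zero_add, pow_one]
    exact_mod_cast (Nat.mod_add_div' (a 0) y).symm
  | succ n ih =>
    obtain ⟨f, hf, ε, hε⟩ := ih (Fin.init a)
    set t := x * ε + a (Fin.last _)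
    refine ⟨Fin.snoc f (t % y), Fin.lastCases ?_ ?_, t / y, ?_⟩
    · simpa using Nat.mod_lt t hy
    · intro k; simpa using hf k
    · have ht : ((t % y + t / y * y : ℕ) : ℤ) = x * ε + a (Fin.last _) := by
        rw [Nat.mod_add_div']; push_cast [t]; rfl
      rw [succ, succ, Fin.init_snoc, Fin.snoc_last, hε]
      push_cast at ht ⊢
      linear_combination -(y : ℤ) ^ (n + 1) * ht

lemma eq_of_dvd_sub (hcop : Nat.Coprime x y) {f g : Fin (n + 1) → ℕ} (hf : ∀ k, f k < y)
    (hg : ∀ k, g k < y) (h : (y : ℤ) ^ (n + 1) ∣ digitVal n x y f - digitVal n x y g) :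
    f = g := by
  induction n with
  | zero =>
    rw [zero, zero, zero_add, pow_one] at h
    funext k
    rw [Fin.fin_one_eq_zero k]
    exact Nat.eq_of_intCast_dvd_sub (hf 0) (hg 0) h
  | succ n ih =>
    rw [succ, succ] at h
    have hsplit : (x : ℤ) * digitVal n x y (Fin.init f) + f (Fin.last _) * y ^ (n + 1)
        - (x * digitVal n x y (Fin.init g) + g (Fin.last _) * y ^ (n + 1))
        = x * (digitVal n x y (Fin.init f) - digitVal n x y (Fin.init g))
          + ((f (Fin.last _) : ℤ) - g (Fin.last _)) * y ^ (n + 1) := by ring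
    rw [hsplit] at h
    have hinit : Fin.init f = Fin.init g := by
      refine ih (fun _ => hf _) (fun _ => hg _) ?_
      have h' := (dvd_add_left (dvd_mul_left _ _)).mp ((pow_dvd_pow _ (n + 1).le_succ).trans h)
      exact ((Nat.isCoprime_iff_coprime.2 hcop.symm).pow_left).dvd_of_dvd_mul_left h'
    rw [hinit, sub_self, mul_zero, zero_add, pow_succ' _ (n + 1)] at h
    have hlast := Nat.eq_of_intCast_dvd_sub (hf _) (hg _)
      ((mul_dvd_mul_iff_right (pow_ne_zero _ (by have := hf 0; omega))).mp h)
    rw [← Fin.snoc_init_self f, ← Fin.snoc_init_self g, hinit, hlast]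

end digitVal

lemma isStableDecomp_iff {n x y : ℕ} {v : ℤ} {c : Fin (n + 1) → ℕ} {m : ℤ} :
    IsStableDecomp n x y v c m ↔ (∀ k, c k < y) ∧ v = digitVal n x y c + m * y ^ (n + 1) :=
  Iff.rfl

lemma IsStableDecomp.overflow_eq {n x y : ℕ} (hcop : Nat.Coprime x y) {v : ℤ}
    {c c' : Fin (n + 1) → ℕ} {m m' : ℤ} (h : IsStableDecomp n x y v c m)
    (h' : IsStableDecomp n x y v c' m') : m = m' := by
  rw [isStableDecomp_iff] at h h'
  obtain ⟨hc, hv⟩ := h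
  obtain ⟨hc', hv'⟩ := h'
  obtain rfl : c = c' :=
    digitVal.eq_of_dvd_sub hcop hc hc' ⟨m' - m, by linear_combination hv' - hv⟩
  have hy : (y : ℤ) ≠ 0 := by have := hc 0; omega
  exact mul_right_cancel₀ (pow_ne_zero (n + 1) hy) (by linear_combination hv' - hv)

theorem stable_m_superadditive_general
    (n x y : ℕ) (hcop : Nat.Coprime x y)
    (v w : ℤ)
    (cv cw cvw : Fin (n + 1) → ℕ) (mv mw mvw : ℤ)
    (hdv : IsStableDecomp n x y v cv mv)
    (hdw : IsStableDecomp n x y w cw mw)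
    (hdvw : IsStableDecomp n x y (v + w) cvw mvw) :
    mv + mw ≤ mvw := by
  have hy : 0 < y := (Nat.zero_le _).trans_lt (hdv.1 0)
  obtain ⟨f, hf, ε, hcarry⟩ := digitVal.exists_digits_add (x := x) hy (cv + cw)
  have hdvw' : IsStableDecomp n x y (v + w) f (mv + mw + ε) :=
    isStableDecomp_iff.mpr ⟨hf, by linear_combination (isStableDecomp_iff.mp hdv).2
      + (isStableDecomp_iff.mp hdw).2 + hcarry - digitVal.add cv cw⟩
  have hmvw := hdvw.overflow_eq hcop hdvw'
  omega

/-- For all integers `v, w ≥ 0`, the overflow coefficient of the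
stable decomposition is superadditive: `m(v + w) ≥ m(v) + m(w)`. -/
theorem stable_m_superadditive
    (n x y : ℕ) (hn : 1 ≤ n) (hx : 0 < x) (hxy : x < y) (hcop : Nat.Coprime x y)
    (v w : ℤ) (hv : 0 ≤ v) (hw : 0 ≤ w)
    (cv cw cvw : Fin (n + 1) → ℕ) (mv mw mvw : ℤ)
    (hdv : IsStableDecomp n x y v cv mv)
    (hdw : IsStableDecomp n x y w cw mw)
    (hdvw : IsStableDecomp n x y (v + w) cvw mvw) :
    mv + mw ≤ mvw :=
  stable_m_superadditive_general n x y hcop v w cv cw cvw mv mw mvw hdv hdw hdvw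
end

section
/- For every integer v ≥ 0, the sequence k ↦ m(v + k·F) indexed by k ∈ ℕ is nondecreasing; in particular m(v + F) ≥ m(v). -/
/-!
Peeling off the lowest digit, a stable decomposition of `v` at level `n + 1` is
`v = c₀·x^(n+1) + y·w` with `w` stably decomposed at level `n` with the same `m`, and
`F_{n+1} = x^(n+1) + y·F_n`. Since `x` and `y` are coprime, `c₀` is determined by `v` modulo `y`,
so by induction `m` is unique. Adding `F` digit by digit, the lowest digit becomes
`c₀ + 1 + e·x < 2y` for an incoming carry `e ∈ {0, 1}`, so the carry into the next level is again
`0` or `1`; at the top it is added to `m`, which therefore never decreases.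
-/

theorem Fval_zero (x y : ℕ) : Fval 0 x y = 1 := by
  simp [Fval]

theorem Fval_succ (n x y : ℕ) : Fval (n + 1) x y = x ^ (n + 1) + y * Fval n x y := by
  rw [Fval, Finset.sum_range_succ', Fval, Finset.mul_sum, add_comm]
  congr 1
  · simp
  · exact Finset.sum_congr rfl fun k _ => by rw [Nat.add_sub_add_right, pow_succ]; ring

theorem eq_and_eq_of_lt_of_mul_add_mul_eq {y a b : ℕ} {u s t : ℤ} (ha : a < y) (hb : b < y)
    (hu : IsCoprime (y : ℤ) u) (h : a * u + y * s = b * u + y * t) : a = b ∧ s = t := by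
  have hdvd : (y : ℤ) ∣ (b - a) * u := ⟨s - t, by linear_combination -h⟩
  have hab : a = b := (Nat.modEq_iff_dvd.mpr (hu.dvd_of_dvd_mul_right hdvd)).eq_of_lt_of_lt ha hb
  subst hab
  exact ⟨rfl, mul_left_cancel₀ (by exact_mod_cast (show y ≠ 0 by omega)) (add_left_cancel h)⟩

theorem exists_digit_carry {x y a e : ℕ} (hxy : x < y) (ha : a < y) (he : e ≤ 1) :
    ∃ r q : ℕ, r < y ∧ q ≤ 1 ∧ (a : ℤ) + 1 + e * x = r + y * q := by
  have hex : e * x ≤ x := by simpa using Nat.mul_le_mul_right x he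
  refine ⟨(a + 1 + e * x) % y, (a + 1 + e * x) / y, Nat.mod_lt _ (by omega),
    Nat.lt_succ_iff.mp ((Nat.div_lt_iff_lt_mul (by omega)).mpr (by omega)), ?_⟩
  exact_mod_cast (Nat.mod_add_div _ _).symm

section

variable {n x y : ℕ} {v m : ℤ}

theorem isStableDecomp_zero_iff {c : Fin 1 → ℕ} :
    IsStableDecomp 0 x y v c m ↔ c 0 < y ∧ v = c 0 + y * m := by
  simp [IsStableDecomp, Fin.forall_fin_one, mul_comm]

theorem isStableDecomp_succ_iff {c : Fin (n + 2) → ℕ} :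
    IsStableDecomp (n + 1) x y v c m ↔
      c 0 < y ∧ ∃ w, IsStableDecomp n x y w (Fin.tail c) m ∧ v = c 0 * x ^ (n + 1) + y * w := by
  have hshift : ∑ k : Fin (n + 1),
        (c k.succ : ℤ) * (x : ℤ) ^ (n + 1 - (k.succ : ℕ)) * (y : ℤ) ^ (k.succ : ℕ)
          + m * (y : ℤ) ^ (n + 1 + 1)
      = y * (∑ k : Fin (n + 1), (Fin.tail c k : ℤ) * (x : ℤ) ^ (n - (k : ℕ)) * (y : ℤ) ^ (k : ℕ)
          + m * (y : ℤ) ^ (n + 1)) := by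
    rw [mul_add, Finset.mul_sum]
    congr 1
    · refine Finset.sum_congr rfl fun k _ => ?_
      simp only [Fin.tail, Fin.val_succ, Nat.add_sub_add_right, pow_succ]
      ring
    · ring
  unfold IsStableDecomp
  rw [Fin.forall_fin_succ, Fin.sum_univ_succ, add_assoc (_ * _ : ℤ), hshift]
  simp only [Fin.val_zero, Nat.sub_zero, pow_zero, mul_one]
  constructor
  · rintro ⟨⟨h0, hs⟩, hv⟩
    exact ⟨h0, _, ⟨hs, rfl⟩, hv⟩
  · rintro ⟨h0, w, ⟨hs, rfl⟩, rfl⟩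
    exact ⟨⟨h0, hs⟩, rfl⟩

namespace IsStableDecomp

theorem m_eq (hcop : Nat.Coprime x y) {c c' : Fin (n + 1) → ℕ} {m' : ℤ}
    (h : IsStableDecomp n x y v c m) (h' : IsStableDecomp n x y v c' m') : m = m' := by
  have hcop' : IsCoprime (y : ℤ) x := Nat.isCoprime_iff_coprime.mpr hcop.symm
  induction n generalizing v m m' with
  | zero =>
    obtain ⟨h0, rfl⟩ := isStableDecomp_zero_iff.mp h
    obtain ⟨h0', hv⟩ := isStableDecomp_zero_iff.mp h'
    exact (eq_and_eq_of_lt_of_mul_add_mul_eq (u := 1) h0 h0' isCoprime_one_right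
      (by simpa using hv)).2
  | succ n ih =>
    obtain ⟨h0, w, hw, rfl⟩ := isStableDecomp_succ_iff.mp h
    obtain ⟨h0', w', hw', hv⟩ := isStableDecomp_succ_iff.mp h'
    obtain ⟨-, rfl⟩ := eq_and_eq_of_lt_of_mul_add_mul_eq h0 h0' hcop'.pow_right hv
    exact ih hw hw'

theorem exists_add_Fval_add_carry (hxy : x < y) {c : Fin (n + 1) → ℕ} {e : ℕ} (he : e ≤ 1)
    (h : IsStableDecomp n x y v c m) :
    ∃ d m', IsStableDecomp n x y (v + Fval n x y + e * x ^ (n + 1)) d m' ∧ m ≤ m' := by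
  induction n generalizing v m e with
  | zero =>
    obtain ⟨h0, rfl⟩ := isStableDecomp_zero_iff.mp h
    obtain ⟨r, q, hr, -, hrq⟩ := exists_digit_carry hxy h0 he
    refine ⟨fun _ => r, m + q, isStableDecomp_zero_iff.mpr ⟨hr, ?_⟩, by omega⟩
    rw [Fval_zero]
    linear_combination hrq
  | succ n ih =>
    obtain ⟨h0, w, hw, rfl⟩ := isStableDecomp_succ_iff.mp h
    obtain ⟨r, q, hr, hq, hrq⟩ := exists_digit_carry hxy h0 he
    obtain ⟨d, m', hd, hm⟩ := ih hq hw
    refine ⟨Fin.cons r d, m', isStableDecomp_succ_iff.mpr ⟨hr, _, by simpa using hd, ?_⟩, hm⟩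
    push_cast [Fval_succ, Fin.cons_zero]
    linear_combination (x : ℤ) ^ (n + 1) * hrq

theorem exists_add_mul_Fval (hxy : x < y) {c : Fin (n + 1) → ℕ}
    (h : IsStableDecomp n x y v c m) (t : ℕ) :
    ∃ d m', IsStableDecomp n x y (v + t * Fval n x y) d m' ∧ m ≤ m' := by
  induction t with
  | zero => exact ⟨c, m, by simpa using h, le_rfl⟩
  | succ t ih =>
    obtain ⟨d, m', hd, hm⟩ := ih
    obtain ⟨d', m'', hd', hm'⟩ := exists_add_Fval_add_carry hxy zero_le_one hd
    refine ⟨d', m'', ?_, hm.trans hm'⟩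
    convert hd' using 1
    push_cast
    ring

end IsStableDecomp

end

theorem stable_m_monotone_general
    (n x y : ℕ) (hxy : x < y) (hcop : Nat.Coprime x y)
    (v : ℤ) :
    ∀ (k l : ℕ), k ≤ l →
      ∀ (ck cl : Fin (n + 1) → ℕ) (mk ml : ℤ),
        IsStableDecomp n x y (v + (k : ℤ) * (Fval n x y : ℤ)) ck mk →
        IsStableDecomp n x y (v + (l : ℤ) * (Fval n x y : ℤ)) cl ml →
        mk ≤ ml := by
  intro k l hkl ck cl mk ml hk hl
  obtain ⟨d, m, hd, hle⟩ := hk.exists_add_mul_Fval hxy (l - k)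
  have hv : v + k * Fval n x y + (l - k : ℕ) * Fval n x y = v + l * Fval n x y := by
    push_cast [hkl]
    ring
  rw [hv] at hd
  exact hle.trans_eq (hd.m_eq hcop hl)

/-- For every integer `v ≥ 0`, the sequence `k ↦ m(v + k·F)`
indexed by `k ∈ ℕ` is nondecreasing; in particular `m(v + F) ≥ m(v)`. -/
theorem stable_m_monotone
    (n x y : ℕ) (hn : 1 ≤ n) (hx : 0 < x) (hxy : x < y) (hcop : Nat.Coprime x y)
    (v : ℤ) (hv : 0 ≤ v) :
    ∀ (k l : ℕ), k ≤ l →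
      ∀ (ck cl : Fin (n + 1) → ℕ) (mk ml : ℤ),
        IsStableDecomp n x y (v + (k : ℤ) * (Fval n x y : ℤ)) ck mk →
        IsStableDecomp n x y (v + (l : ℤ) * (Fval n x y : ℤ)) cl ml →
        mk ≤ ml :=
  stable_m_monotone_general n x y hxy hcop v
end

section
/- Let v be an integer. (i) If m(v) < 0, then v − F ∉ G. (ii) If m(v) ≥ 0, then v + F ∉ G. -/
/-!
Write `w_k = x^(n-k) y^k`. If `y^(n+1)` divides `Σ_{k≤n} δ_k w_k` and every `δ_k > -y`, the sum
is nonnegative. Indeed, the sum is `x · S + δ_n y^n` with `S` the same sum one digit shorter;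
coprimality gives `y^n ∣ S`, so by induction `S = y^n u` with `u ≥ 0`, and then
`y ∣ x u + δ_n > -y` forces `x u + δ_n ≥ 0`. Applied to the difference of two expansions of `v`,
this says that `m(v)` is at least the `m` of any expansion of `v` with digits `≥ 0` and at most
the `m` of any expansion with digits `< y`.

For (i), `v = val(d) + F` is an expansion with digits `d_k + 1 ≥ 0` and `m = 0`. For (ii),
subtracting `F` from a word `d` of `L_d` borrows at its zero digit, and the borrow runs through
the following digits in `[1, x]` up to `y^(n+1)`: this expands `v = val(d) - F` with digits
`< y` and `m = -1`.
-/
theorem nonneg_of_dvd_of_neg_lt {a y : ℤ} (hy : 0 < y) (hdvd : y ∣ a) (ha : -y < a) :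
    0 ≤ a := by
  obtain ⟨t, rfl⟩ := hdvd
  have : -1 < t := by nlinarith
  exact mul_nonneg hy.le (by omega)

def digitSum (n : ℕ) (x y : ℤ) (δ : Fin (n + 1) → ℤ) : ℤ :=
  ∑ k : Fin (n + 1), δ k * x ^ (n - (k : ℕ)) * y ^ (k : ℕ)

section digitSum

variable {n : ℕ} {x y : ℤ}

theorem digitSum_zero (δ : Fin 1 → ℤ) : digitSum 0 x y δ = δ 0 := by
  simp [digitSum]

theorem digitSum_add (a b : Fin (n + 1) → ℤ) :
    digitSum n x y (fun k => a k + b k) = digitSum n x y a + digitSum n x y b := by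
  simp only [digitSum, add_mul, Finset.sum_add_distrib]

theorem digitSum_sub (a b : Fin (n + 1) → ℤ) :
    digitSum n x y (fun k => a k - b k) = digitSum n x y a - digitSum n x y b := by
  simp only [digitSum, sub_mul, Finset.sum_sub_distrib]

theorem digitSum_succ (δ : Fin (n + 2) → ℤ) :
    digitSum (n + 1) x y δ =
      x * digitSum n x y (fun k => δ k.castSucc) + δ (Fin.last (n + 1)) * y ^ (n + 1) := by
  rw [digitSum, Fin.sum_univ_castSucc, digitSum, Finset.mul_sum]
  congr 1
  · refine Finset.sum_congr rfl fun k _ => ?_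
    rw [Fin.val_castSucc, show n + 1 - (k : ℕ) = n - k + 1 by omega, pow_succ]
    ring
  · simp

theorem digitSum_nonneg_of_pow_dvd (hy : 0 < y) (hx : 0 ≤ x) (hxy : IsCoprime x y)
    {δ : Fin (n + 1) → ℤ} (hδ : ∀ k, -y < δ k) (hdvd : y ^ (n + 1) ∣ digitSum n x y δ) :
    0 ≤ digitSum n x y δ := by
  induction n with
  | zero =>
    rw [digitSum_zero, zero_add, pow_one] at hdvd
    rw [digitSum_zero]
    exact nonneg_of_dvd_of_neg_lt hy hdvd (hδ 0)
  | succ n ih =>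
    rw [digitSum_succ] at hdvd ⊢
    obtain ⟨u, hu⟩ : y ^ (n + 1) ∣ digitSum n x y (fun k => δ k.castSucc) := by
      have : y ^ (n + 1) ∣ x * digitSum n x y (fun k => δ k.castSucc) :=
        (dvd_add_left (dvd_mul_left _ _)).mp ((pow_dvd_pow y n.succ.le_succ).trans hdvd)
      exact (hxy.symm.pow_left).dvd_of_dvd_mul_left this
    have hu0 : 0 ≤ u := by
      have := ih (fun k => hδ _) ⟨u, hu⟩
      rw [hu] at this
      exact nonneg_of_mul_nonneg_right this (pow_pos hy _)
    have hsplit : x * digitSum n x y (fun k => δ k.castSucc) + δ (Fin.last (n + 1)) * y ^ (n + 1)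
        = y ^ (n + 1) * (x * u + δ (Fin.last (n + 1))) := by
      rw [hu]; ring
    rw [hsplit] at hdvd ⊢
    have htop : 0 ≤ x * u + δ (Fin.last (n + 1)) := by
      refine nonneg_of_dvd_of_neg_lt hy ?_ (by nlinarith [hδ (Fin.last (n + 1))])
      rw [pow_succ] at hdvd
      exact (mul_dvd_mul_iff_left (pow_ne_zero (n + 1) hy.ne')).mp hdvd
    exact mul_nonneg (pow_pos hy _).le htop

theorem le_of_digitSum_add_mul_eq (hy : 0 < y) (hx : 0 ≤ x) (hxy : IsCoprime x y)
    {a b : Fin (n + 1) → ℤ} {p q : ℤ} (hab : ∀ k, -y < a k - b k)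
    (h : digitSum n x y a + p * y ^ (n + 1) = digitSum n x y b + q * y ^ (n + 1)) : p ≤ q := by
  have hS : digitSum n x y (fun k => a k - b k) = y ^ (n + 1) * (q - p) := by
    rw [digitSum_sub]; linarith
  have := digitSum_nonneg_of_pow_dvd hy hx hxy hab ⟨_, hS⟩
  rw [hS] at this
  linarith [nonneg_of_mul_nonneg_right this (pow_pos hy _)]

/-- The digit changes of a borrow started at the digit `j` and carried up to `y ^ (n + 1)`:
`y` at `j`, then `y - x` at every later digit. -/
def borrowChain (x y : ℤ) (j : Fin (n + 1)) (i : Fin (n + 1)) : ℤ :=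
  if i = j then y else if j < i then y - x else 0

theorem digitSum_borrowChain (j : Fin (n + 1)) :
    digitSum n x y (borrowChain x y j) = y ^ (n + 1) := by
  let g : ℕ → ℤ := fun i => if i ≤ j then 0 else x ^ (n + 1 - i) * y ^ i
  have hstep (i : Fin (n + 1)) :
      borrowChain x y j i * x ^ (n - (i : ℕ)) * y ^ (i : ℕ) = g (i + 1) - g i := by
    have hi := i.isLt
    simp only [borrowChain, g, Fin.lt_def, Fin.ext_iff]
    rcases lt_trichotomy (i : ℕ) j with h | h | h
    · simp [h.ne, h.not_gt, h.le, Nat.succ_le_of_lt h]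
    · simp only [h, if_pos, le_refl, lt_irrefl, if_false, Nat.not_succ_le_self, sub_zero]
      rw [show n + 1 - ((j : ℕ) + 1) = n - j by omega, pow_succ]
      ring
    · simp only [h.ne', if_false, h, if_true, not_le.mpr h,
        not_le.mpr (h.trans (Nat.lt_succ_self _))]
      rw [show n + 1 - ((i : ℕ) + 1) = n - i by omega,
        show n + 1 - (i : ℕ) = n - i + 1 by omega]
      ring
  rw [digitSum, Finset.sum_congr rfl fun i _ => hstep i,
    Fin.sum_univ_eq_sum_range (fun i => g (i + 1) - g i), Finset.sum_range_sub]
  simp [g, Fin.is_le]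

end digitSum

theorem tupleVal_eq_digitSum (n x y : ℕ) (d : Fin (n + 2) → ℕ) :
    (tupleVal n x y d : ℤ) = digitSum n x y (fun k => d k.castSucc) := by
  simp [tupleVal, digitSum]

theorem Fval_eq_digitSum (n x y : ℕ) : (Fval n x y : ℤ) = digitSum n x y (fun _ => 1) := by
  simp [Fval, digitSum, ← Fin.sum_univ_eq_sum_range]

namespace IsStableDecomp

variable {n x y : ℕ} {v : ℤ} {c : Fin (n + 1) → ℕ} {m : ℤ}

theorem le_of_digits_nonneg (h : IsStableDecomp n x y v c m) (hxy : Nat.Coprime x y)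
    {e : Fin (n + 1) → ℤ} {m' : ℤ} (he : ∀ k, 0 ≤ e k)
    (hv : v = digitSum n x y e + m' * y ^ (n + 1)) : m' ≤ m :=
  le_of_digitSum_add_mul_eq (by linarith [h.1 0]) (Int.natCast_nonneg x)
    (Nat.isCoprime_iff_coprime.mpr hxy) (fun k => by linarith [h.1 k, he k]) (hv.symm.trans h.2)

theorem ge_of_digits_lt (h : IsStableDecomp n x y v c m) (hxy : Nat.Coprime x y)
    {e : Fin (n + 1) → ℤ} {m' : ℤ} (he : ∀ k, e k < y)
    (hv : v = digitSum n x y e + m' * y ^ (n + 1)) : m ≤ m' :=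
  le_of_digitSum_add_mul_eq (by linarith [h.1 0]) (Int.natCast_nonneg x)
    (Nat.isCoprime_iff_coprime.mpr hxy) (fun k => by linarith [he k, Int.natCast_nonneg (c k)])
    (h.2.symm.trans hv)

end IsStableDecomp

theorem exists_digitSum_add_Fval_eq_of_mem_Ld {n x y : ℕ} {d : Fin (n + 2) → ℕ}
    (hd : d ∈ Ld n x y) :
    ∃ e : Fin (n + 1) → ℤ, (∀ k, e k < y) ∧
      digitSum n x y e + Fval n x y = tupleVal n x y d + (y : ℤ) ^ (n + 1) := by
  obtain ⟨-, j, hlt, hj, hgt⟩ := hd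
  refine ⟨fun i => (d i.castSucc : ℤ) - 1 + borrowChain x y j i, fun i => ?_, ?_⟩
  · have hi := i.isLt
    simp only [borrowChain, Fin.lt_def, Fin.ext_iff]
    split_ifs with h₁ h₂
    · rw [show i = j from Fin.ext h₁, hj]; simp
    · linarith [(hgt i.castSucc h₂ (Nat.lt_succ_iff.mp hi)).2]
    · linarith [hlt i.castSucc (show (i : ℕ) < j by omega)]
  · rw [digitSum_add, digitSum_sub, digitSum_borrowChain, tupleVal_eq_digitSum,
      Fval_eq_digitSum]
    ring

theorem not_mem_G_of_stable_m_general
    (n x y : ℕ) (hcop : Nat.Coprime x y)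
    (v : ℤ) (c : Fin (n + 1) → ℕ) (m : ℤ) (hdec : IsStableDecomp n x y v c m) :
    (m < 0 → v - (Fval n x y : ℤ) ∉ Gset n x y) ∧
    (0 ≤ m → v + (Fval n x y : ℤ) ∉ Gset n x y) := by
  constructor
  · rintro hm ⟨d, -, hd⟩
    have : (0 : ℤ) ≤ m := hdec.le_of_digits_nonneg hcop (e := fun k => d k.castSucc + 1)
      (fun k => by positivity)
      (by rw [digitSum_add, ← tupleVal_eq_digitSum, hd, ← Fval_eq_digitSum]; ring)
    omega
  · rintro hm ⟨d, hd, hval⟩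
    obtain ⟨e, he, hsum⟩ := exists_digitSum_add_Fval_eq_of_mem_Ld hd
    have : m ≤ -1 := hdec.ge_of_digits_lt hcop he (by linarith)
    omega

/-- Let `v` be an integer. (i) If `m(v) < 0`, then `v − F ∉ G`.
(ii) If `m(v) ≥ 0`, then `v + F ∉ G`. -/
theorem not_mem_G_of_stable_m
    (n x y : ℕ) (hn : 1 ≤ n) (hx : 0 < x) (hxy : x < y) (hcop : Nat.Coprime x y)
    (v : ℤ) (c : Fin (n + 1) → ℕ) (m : ℤ) (hdec : IsStableDecomp n x y v c m) :
    (m < 0 → v - (Fval n x y : ℤ) ∉ Gset n x y) ∧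
    (0 ≤ m → v + (Fval n x y : ℤ) ∉ Gset n x y) :=
  not_mem_G_of_stable_m_general n x y hcop v c m hdec
end

section
/- For every v ∈ {0,…,F−1} there is exactly one natural number k such that v + k·F ∈ G; moreover, this k is the smallest natural number with m(v + k·F) ≥ 0. -/
/-!
Adding `F` to an integer adds 1 to each digit `c_0, …, c_n` of its stable decomposition, with a
carry worth `x` from position `k` to position `k + 1` (because
`y · x^(n-k) y^k = x · x^(n-k-1) y^(k+1)`); the carry out of position `n` raises `m` by 0 or 1.
By induction on `n`, the digits after the addition are matched by `[0,y-1]*·0·[1,x]*` exactly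
when that top carry occurs. So along `v, v + F, v + 2F, …` the value of `m` starts at
`m(v) ≤ 0` and climbs in steps of 0 or 1, and `v + kF ∈ G` (that is, `m = 0` and the digits
match) happens precisely at the first `k` with `m ≥ 0`; for `k = 0` this uses that the digits
of a `v < F` with `m(v) = 0` always match.
-/

open Finset

namespace StableDecomp

variable {n x y : ℕ}

lemma eq_zero_and_iff_of_isLeast_nonneg {M : ℕ → ℤ} {P : ℕ → Prop}
    (hstep : ∀ j, M (j + 1) = M j ∨ M (j + 1) = M j + 1) (hP : ∀ j, P (j + 1) ↔ M (j + 1) = M j + 1)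
    (hM0 : M 0 ≤ 0) (hP0 : M 0 = 0 → P 0) {j₀ : ℕ} (hj₀ : IsLeast {j | 0 ≤ M j} j₀) (k : ℕ) :
    M k = 0 ∧ P k ↔ k = j₀ := by
  have hmono : Monotone M := monotone_nat_of_le_succ fun j => by rcases hstep j with h | h <;> omega
  have hneg : ∀ j < j₀, M j < 0 := fun j hj => not_le.1 fun h => (hj₀.2 h).not_gt hj
  have hj₀0 : M j₀ = 0 := by
    have : 0 ≤ M j₀ := hj₀.1
    rcases j₀ with _ | j
    · exact le_antisymm hM0 this
    · have := hneg j (by omega)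
      rcases hstep j with h | h <;> omega
  constructor
  · rintro ⟨hk, hPk⟩
    have hle : j₀ ≤ k := hj₀.2 hk.ge
    rcases k with _ | k
    · omega
    · by_contra hne
      have := (hP k).1 hPk
      have := hmono (show j₀ ≤ k by omega)
      omega
  · rintro rfl
    refine ⟨hj₀0, ?_⟩
    rcases k with _ | j
    · exact hP0 hj₀0
    · have := hneg j (by omega)
      rw [hP]
      rcases hstep j with h | h <;> omega

def digitSum (n x y : ℕ) (c : ℕ → ℕ) : ℤ :=
  ∑ k ∈ range (n + 1), (c k : ℤ) * (x : ℤ) ^ (n - k) * (y : ℤ) ^ k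

-- `IsStableDecomp` with digits indexed by `ℕ` (only `c 0, …, c n` matter), so that carries can
-- be defined by recursion on the position.
def IsDecomp (n x y : ℕ) (w : ℤ) (c : ℕ → ℕ) (m : ℤ) : Prop :=
  (∀ k ≤ n, c k < y) ∧ w = digitSum n x y c + m * (y : ℤ) ^ (n + 1)

lemma Fval_eq_digitSum_one (n x y : ℕ) : (Fval n x y : ℤ) = digitSum n x y (fun _ => 1) := by
  simp [Fval, digitSum]

lemma digitSum_succ (n x y : ℕ) (c : ℕ → ℕ) :
    digitSum (n + 1) x y c = x * digitSum n x y c + c (n + 1) * (y : ℤ) ^ (n + 1) := by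
  rw [digitSum, sum_range_succ, Nat.sub_self, pow_zero, mul_one, digitSum, mul_sum]
  congr 1
  refine sum_congr rfl fun k hk => ?_
  rw [show n + 1 - k = n - k + 1 by grind, pow_succ]
  ring

lemma digitSum_succ' (n x y : ℕ) (c : ℕ → ℕ) :
    digitSum (n + 1) x y c = c 0 * (x : ℤ) ^ (n + 1) + y * digitSum n x y (fun k => c (k + 1)) := by
  rw [digitSum, sum_range_succ', digitSum, mul_sum, add_comm]
  congr 1
  · simp
  · refine sum_congr rfl fun k _ => ?_
    rw [Nat.add_sub_add_right, pow_succ]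
    ring

lemma digitSum_zero (x y : ℕ) (c : ℕ → ℕ) : digitSum 0 x y c = c 0 := by
  simp [digitSum]

lemma digitSum_nonneg (c : ℕ → ℕ) : 0 ≤ digitSum n x y c :=
  sum_nonneg fun _ _ => by positivity

lemma digitSum_mono {c c' : ℕ → ℕ} (h : ∀ k ≤ n, c k ≤ c' k) :
    digitSum n x y c ≤ digitSum n x y c' :=
  sum_le_sum fun k hk => by gcongr; exact h k (by grind)

lemma Fval_le_pow (hxy : x < y) (n : ℕ) : (Fval n x y : ℤ) ≤ (y : ℤ) ^ (n + 1) := by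
  induction n with
  | zero => simp [Fval]; omega
  | succ n ih =>
    rw [Fval_eq_digitSum_one, digitSum_succ, ← Fval_eq_digitSum_one, pow_succ _ (n + 1)]
    have : (x : ℤ) + 1 ≤ y := by exact_mod_cast hxy
    push_cast
    nlinarith [pow_pos (show (0 : ℤ) < y by omega) (n + 1)]

lemma digitSum_le_pred_mul_Fval {c : ℕ → ℕ} (hc : ∀ k ≤ n, c k < y) :
    digitSum n x y c ≤ ((y : ℤ) - 1) * Fval n x y := by
  calc digitSum n x y c ≤ digitSum n x y (fun _ => y - 1) := digitSum_mono fun k hk => by grind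
    _ = ((y : ℤ) - 1) * Fval n x y := by
      rw [Fval_eq_digitSum_one, digitSum, digitSum, mul_sum]
      refine sum_congr rfl fun k _ => ?_
      have : 0 < y := by grind
      push_cast [this]
      ring

lemma eq_of_dvd_sub_mul_pow {a b : ℕ} (hcop : x.Coprime y) (ha : a < y) (hb : b < y) (k : ℕ)
    (h : (y : ℤ) ∣ ((a : ℤ) - b) * (x : ℤ) ^ k) : a = b := by
  have hcop' : IsCoprime (y : ℤ) ((x : ℤ) ^ k) :=
    (Nat.isCoprime_iff_coprime.2 hcop.symm).pow_right
  have := Int.eq_zero_of_abs_lt_dvd (hcop'.dvd_of_dvd_mul_right h) (by rw [abs_lt]; omega)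
  omega

lemma exists_lt_dvd_sub_mul {a : ℕ} (hy : 0 < y) (hcop : a.Coprime y) (w : ℤ) :
    ∃ r < y, (y : ℤ) ∣ w - r * a := by
  obtain ⟨u, v, huv⟩ := Nat.isCoprime_iff_coprime.2 hcop
  have hr := Int.emod_nonneg (w * u) (show (y : ℤ) ≠ 0 by omega)
  have hr' := Int.emod_lt_of_pos (w * u) (show (0 : ℤ) < y by omega)
  refine ⟨((w * u) % y).toNat, by omega, ?_⟩
  obtain ⟨q, hq⟩ := Int.dvd_self_sub_emod (x := w * u) (m := y)
  refine ⟨w * v + q * a, ?_⟩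
  rw [Int.toNat_of_nonneg hr]
  linear_combination (a : ℤ) * hq - w * huv

lemma digitSum_add_mul_pow_inj (hcop : x.Coprime y) {c c' : ℕ → ℕ} {m m' : ℤ}
    (hc : ∀ k ≤ n, c k < y) (hc' : ∀ k ≤ n, c' k < y)
    (h : digitSum n x y c + m * (y : ℤ) ^ (n + 1) = digitSum n x y c' + m' * (y : ℤ) ^ (n + 1)) :
    (∀ k ≤ n, c k = c' k) ∧ m = m' := by
  have hy : (y : ℤ) ≠ 0 := by have := hc 0 (Nat.zero_le n); omega
  induction n generalizing c c' m m' with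
  | zero =>
    rw [digitSum_zero, digitSum_zero] at h
    have h0 : c 0 = c' 0 := eq_of_dvd_sub_mul_pow hcop (hc 0 le_rfl) (hc' 0 le_rfl) 0
      ⟨m' - m, by linear_combination h⟩
    refine ⟨fun k hk => by rwa [Nat.le_zero.1 hk], ?_⟩
    rw [h0] at h
    exact mul_right_cancel₀ hy (by linear_combination h)
  | succ n ih =>
    rw [digitSum_succ', digitSum_succ'] at h
    have h0 : c 0 = c' 0 := eq_of_dvd_sub_mul_pow hcop (hc 0 (Nat.zero_le _))
      (hc' 0 (Nat.zero_le _)) (n + 1)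
      ⟨digitSum n x y (fun k => c' (k + 1)) - digitSum n x y (fun k => c (k + 1))
        + (m' - m) * (y : ℤ) ^ (n + 1), by linear_combination h⟩
    rw [h0] at h
    have htail_eq : digitSum n x y (fun k => c (k + 1)) + m * (y : ℤ) ^ (n + 1)
        = digitSum n x y (fun k => c' (k + 1)) + m' * (y : ℤ) ^ (n + 1) :=
      mul_left_cancel₀ hy (by linear_combination h)
    obtain ⟨htail, hm⟩ :=
      ih (fun k hk => hc (k + 1) (by omega)) (fun k hk => hc' (k + 1) (by omega)) htail_eq
    refine ⟨fun k hk => ?_, hm⟩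
    cases k with
    | zero => exact h0
    | succ k => exact htail k (by omega)

lemma IsDecomp.unique (hcop : x.Coprime y) {w : ℤ} {c c' : ℕ → ℕ} {m m' : ℤ}
    (h : IsDecomp n x y w c m) (h' : IsDecomp n x y w c' m') :
    (∀ k ≤ n, c k = c' k) ∧ m = m' :=
  digitSum_add_mul_pow_inj hcop h.1 h'.1 (h.2.symm.trans h'.2)

lemma exists_isDecomp (hy : 0 < y) (hcop : x.Coprime y) (n : ℕ) (w : ℤ) :
    ∃ c m, IsDecomp n x y w c m := by
  induction n generalizing w with
  | zero =>
    obtain ⟨r, hr, q, hq⟩ := exists_lt_dvd_sub_mul hy (Nat.coprime_one_left y) w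
    exact ⟨fun _ => r, q, by simpa, by rw [digitSum_zero]; linear_combination hq⟩
  | succ n ih =>
    obtain ⟨r, hr, q, hq⟩ := exists_lt_dvd_sub_mul hy (hcop.pow_left (n + 1)) w
    obtain ⟨c, m, hc, hq'⟩ := ih q
    refine ⟨fun | 0 => r | k + 1 => c k, m, fun k hk => ?_, ?_⟩
    · cases k with
      | zero => exact hr
      | succ k => exact hc k (by omega)
    · rw [digitSum_succ']
      push_cast at hq
      linear_combination hq + (y : ℤ) * hq'

def carry (x y : ℕ) (c : ℕ → ℕ) : ℕ → ℕ
  | 0 => 0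
  | k + 1 => if y ≤ c k + 1 + x * carry x y c k then 1 else 0

def addOnes (x y : ℕ) (c : ℕ → ℕ) (k : ℕ) : ℕ :=
  c k + 1 + x * carry x y c k - y * carry x y c (k + 1)

lemma carry_eq_zero_or_one (x y : ℕ) (c : ℕ → ℕ) : ∀ k, carry x y c k = 0 ∨ carry x y c k = 1
  | 0 => .inl rfl
  | k + 1 => by rw [carry]; split <;> simp

lemma addOnes_cases (x y : ℕ) (c : ℕ → ℕ) (k : ℕ) :
    carry x y c (k + 1) = 0 ∧ addOnes x y c k = c k + 1 + x * carry x y c k ∧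
        c k + 1 + x * carry x y c k < y ∨
      carry x y c (k + 1) = 1 ∧ addOnes x y c k + y = c k + 1 + x * carry x y c k := by
  unfold addOnes
  rw [carry]
  split <;> simp <;> omega

lemma addOnes_lt (hxy : x < y) {c : ℕ → ℕ} {k : ℕ} (hck : c k < y) : addOnes x y c k < y := by
  rcases addOnes_cases x y c k with ⟨-, hd, hs⟩ | ⟨-, hd⟩
  · omega
  · rcases carry_eq_zero_or_one x y c k with ha | ha <;> simp only [ha, mul_zero, mul_one] at hd <;>
      omega

-- The regular expression `[0,y-1]*·0·[1,x]*` on `c 0, …, c n`, without the bound `c k < y`.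
def LdPattern (n x : ℕ) (c : ℕ → ℕ) : Prop :=
  ∃ k ≤ n, c k = 0 ∧ ∀ i, k < i → i ≤ n → 1 ≤ c i ∧ c i ≤ x

lemma ldPattern_zero_iff {c : ℕ → ℕ} : LdPattern 0 x c ↔ c 0 = 0 :=
  ⟨fun ⟨k, hk, h0, _⟩ => Nat.le_zero.1 hk ▸ h0, fun h => ⟨0, le_rfl, h, by omega⟩⟩

lemma ldPattern_succ_iff {c : ℕ → ℕ} :
    LdPattern (n + 1) x c ↔ c (n + 1) = 0 ∨ LdPattern n x c ∧ 1 ≤ c (n + 1) ∧ c (n + 1) ≤ x := by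
  constructor
  · rintro ⟨k, hk, h0, htail⟩
    obtain rfl | hk := eq_or_lt_of_le hk
    · exact .inl h0
    · exact .inr ⟨⟨k, by omega, h0, fun i hki hi => htail i hki (by omega)⟩,
        htail (n + 1) hk le_rfl⟩
  · rintro (h | ⟨⟨k, hk, h0, htail⟩, hlast⟩)
    · exact ⟨n + 1, le_rfl, h, by omega⟩
    · refine ⟨k, by omega, h0, fun i hki hi => ?_⟩
      obtain rfl | hi := eq_or_lt_of_le hi
      · exact hlast
      · exact htail i hki (by omega)

lemma LdPattern.congr {c c' : ℕ → ℕ} (h : ∀ k ≤ n, c k = c' k) (hc : LdPattern n x c) :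
    LdPattern n x c' := by
  obtain ⟨k, hk, h0, htail⟩ := hc
  exact ⟨k, hk, h k hk ▸ h0, fun i hki hi => h i hi ▸ htail i hki hi⟩

lemma ldPattern_addOnes_iff {c : ℕ → ℕ} (hc : ∀ k ≤ n, c k < y) :
    LdPattern n x (addOnes x y c) ↔ carry x y c (n + 1) = 1 := by
  induction n with
  | zero =>
    have := hc 0 le_rfl
    rw [ldPattern_zero_iff]
    rcases addOnes_cases x y c 0 with ⟨hb, hd, -⟩ | ⟨hb, hd⟩ <;>
      simp only [carry, mul_zero] at hd <;> omega
  | succ n ih =>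
    rw [ldPattern_succ_iff, ih fun k hk => hc k (by omega)]
    have := hc (n + 1) le_rfl
    rcases addOnes_cases x y c (n + 1) with ⟨hb, hd, hs⟩ | ⟨hb, hd⟩ <;>
      rcases carry_eq_zero_or_one x y c (n + 1) with ha | ha <;>
      simp only [ha, hb, mul_zero, mul_one, add_zero, zero_ne_one, false_and, or_false, true_and,
        iff_true, iff_false] at * <;> omega

lemma addOnes_add_mul_carry (x y : ℕ) (c : ℕ → ℕ) (k : ℕ) :
    addOnes x y c k + y * carry x y c (k + 1) = c k + 1 + x * carry x y c k := by
  rcases addOnes_cases x y c k with ⟨hb, hd, -⟩ | ⟨hb, hd⟩ <;> rw [hb] <;> omega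

lemma digitSum_addOnes (n x y : ℕ) (c : ℕ → ℕ) :
    digitSum n x y (addOnes x y c) =
      digitSum n x y c + Fval n x y - carry x y c (n + 1) * (y : ℤ) ^ (n + 1) := by
  set t : ℕ → ℤ := fun k => carry x y c k * (x : ℤ) ^ (n + 1 - k) * (y : ℤ) ^ k
  have hterm : ∀ k ∈ range (n + 1), (addOnes x y c k : ℤ) * (x : ℤ) ^ (n - k) * (y : ℤ) ^ k =
      (c k : ℤ) * (x : ℤ) ^ (n - k) * (y : ℤ) ^ k + (x : ℤ) ^ (n - k) * (y : ℤ) ^ k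
        + (t k - t (k + 1)) := by
    intro k hk
    have hcast : (addOnes x y c k : ℤ) = c k + 1 + x * carry x y c k - y * carry x y c (k + 1) := by
      have := addOnes_add_mul_carry x y c k
      omega
    simp only [t, hcast, show n + 1 - k = n - k + 1 by grind, Nat.add_sub_add_right, pow_succ]
    ring
  have ht0 : t 0 = 0 := by simp [t, carry]
  rw [digitSum, sum_congr rfl hterm, sum_add_distrib, sum_add_distrib, sum_range_sub', ht0,
    digitSum, Fval]
  simp only [t, Nat.sub_self, pow_zero, mul_one]
  push_cast
  ring

lemma IsDecomp.add_Fval (hxy : x < y) {w : ℤ} {c : ℕ → ℕ} {m : ℤ} (h : IsDecomp n x y w c m) :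
    IsDecomp n x y (w + Fval n x y) (addOnes x y c) (m + carry x y c (n + 1)) := by
  refine ⟨fun k hk => addOnes_lt hxy (h.1 k hk), ?_⟩
  rw [digitSum_addOnes, h.2]
  ring

lemma ldPattern_of_digitSum_lt_Fval (hx : 0 < x) (hxy : x < y) {c : ℕ → ℕ}
    (hc : ∀ k ≤ n, c k < y) (h : digitSum n x y c < Fval n x y) : LdPattern n x c := by
  induction n with
  | zero =>
    rw [ldPattern_zero_iff]
    rw [digitSum_zero] at h
    simp [Fval] at h
    omega
  | succ n ih =>
    rw [Fval_eq_digitSum_one, digitSum_succ, digitSum_succ, ← Fval_eq_digitSum_one,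
      Nat.cast_one, one_mul] at h
    rw [ldPattern_succ_iff]
    by_cases h0 : c (n + 1) = 0
    · exact .inl h0
    set S := digitSum n x y c
    set Y := (y : ℤ) ^ (n + 1)
    have hS : 0 ≤ S := digitSum_nonneg c
    have hF : (Fval n x y : ℤ) ≤ Y := Fval_le_pow hxy n
    have hY : 0 ≤ Y := by positivity
    have hx' : (0 : ℤ) < x := by exact_mod_cast hx
    have hc1 : (1 : ℤ) ≤ c (n + 1) := by exact_mod_cast Nat.one_le_iff_ne_zero.2 h0
    have hlt : S < Fval n x y := lt_of_mul_lt_mul_left (by nlinarith) hx'.le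
    have hcx : (c (n + 1) : ℤ) < x + 1 := lt_of_mul_lt_mul_right (a := Y) (by nlinarith) hY
    exact .inr ⟨ih (fun k hk => hc k (by omega)) hlt, by omega, by omega⟩

lemma IsDecomp.add_Fval_step (hxy : x < y) (hcop : x.Coprime y) {w : ℤ} {c c' : ℕ → ℕ}
    {m m' : ℤ} (h : IsDecomp n x y w c m) (h' : IsDecomp n x y (w + Fval n x y) c' m') :
    (m' = m ∨ m' = m + 1) ∧ (LdPattern n x c' ↔ m' = m + 1) := by
  obtain ⟨hdig, hm⟩ := (h.add_Fval hxy).unique hcop h'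
  have hpat : LdPattern n x c' ↔ carry x y c (n + 1) = 1 := by
    rw [← ldPattern_addOnes_iff h.1]
    exact ⟨.congr fun k hk => (hdig k hk).symm, .congr hdig⟩
  rw [hpat, ← hm]
  rcases carry_eq_zero_or_one x y c (n + 1) with hb | hb <;> simp [hb]

lemma IsDecomp.nonpos_of_lt_Fval (hxy : x < y) {w : ℤ} {c : ℕ → ℕ} {m : ℤ}
    (h : IsDecomp n x y w c m) (hw : w < Fval n x y) : m ≤ 0 := by
  have hS := digitSum_nonneg (n := n) (x := x) (y := y) c
  have hF := Fval_le_pow hxy n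
  by_contra! hm
  nlinarith [h.2]

lemma IsDecomp.nonneg_of_le {w : ℤ} {c : ℕ → ℕ} {m : ℤ} (h : IsDecomp n x y w c m)
    (hw : ((y : ℤ) - 1) * Fval n x y ≤ w) : 0 ≤ m := by
  have hS := digitSum_le_pred_mul_Fval (x := x) h.1
  have hY : (0 : ℤ) < (y : ℤ) ^ (n + 1) :=
    pow_pos (by have := h.1 0 (Nat.zero_le n); omega) _
  by_contra! hm
  nlinarith [h.2]

lemma IsDecomp.ldPattern_of_lt_Fval (hx : 0 < x) (hxy : x < y) {w : ℤ} {c : ℕ → ℕ}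
    (h : IsDecomp n x y w c 0) (hw : w < Fval n x y) : LdPattern n x c :=
  ldPattern_of_digitSum_lt_Fval hx hxy h.1 (by simpa [h.2] using hw)

lemma exists_comp_val_eq {N : ℕ} (t : Fin N → ℕ) : ∃ c : ℕ → ℕ, t = fun i : Fin N => c i :=
  ⟨fun i => if h : i < N then t ⟨i, h⟩ else 0, funext fun i => by simp⟩

lemma isStableDecomp_comp_val_iff {w : ℤ} {c : ℕ → ℕ} {m : ℤ} :
    IsStableDecomp n x y w (fun k => c k) m ↔ IsDecomp n x y w c m := by
  rw [IsStableDecomp, IsDecomp, digitSum,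
    Fin.sum_univ_eq_sum_range (fun k => (c k : ℤ) * (x : ℤ) ^ (n - k) * (y : ℤ) ^ k)]
  exact and_congr_left' ⟨fun h k hk => h ⟨k, by omega⟩, fun h k => h k (by omega)⟩

lemma IsDecomp.exists_isStableDecomp_nonneg_iff (hcop : x.Coprime y) {w : ℤ} {c : ℕ → ℕ}
    {m : ℤ} (h : IsDecomp n x y w c m) :
    (∃ c' m', IsStableDecomp n x y w c' m' ∧ 0 ≤ m') ↔ 0 ≤ m := by
  constructor
  · rintro ⟨c', m', h', hm'⟩
    obtain ⟨d, rfl⟩ := exists_comp_val_eq c'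
    rwa [(h.unique hcop (isStableDecomp_comp_val_iff.1 h')).2]
  · exact fun hm => ⟨_, m, isStableDecomp_comp_val_iff.2 h, hm⟩

lemma tupleVal_eq_digitSum {t : Fin (n + 2) → ℕ} {c : ℕ → ℕ}
    (h : ∀ i : Fin (n + 1), t i.castSucc = c i) : (tupleVal n x y t : ℤ) = digitSum n x y c := by
  rw [tupleVal, digitSum,
    ← Fin.sum_univ_eq_sum_range (fun k => (c k : ℤ) * (x : ℤ) ^ (n - k) * (y : ℤ) ^ k)]
  push_cast
  simp only [h]

lemma mem_Gset_iff_exists_isDecomp (hxy : x < y) {w : ℤ} :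
    w ∈ Gset n x y ↔ ∃ c, IsDecomp n x y w c 0 ∧ LdPattern n x c := by
  constructor
  · rintro ⟨t, ⟨-, k, hpre, hk0, htail⟩, rfl⟩
    obtain ⟨c, rfl⟩ := exists_comp_val_eq t
    have hval : (tupleVal n x y (fun i => c i) : ℤ) = digitSum n x y c :=
      tupleVal_eq_digitSum fun i => rfl
    refine ⟨c, ⟨fun i hi => ?_, by simp [hval]⟩, k, k.is_le, hk0,
      fun i hki hi => htail ⟨i, by omega⟩ hki hi⟩
    rcases lt_trichotomy i k with hik | rfl | hki
    · exact hpre ⟨i, by omega⟩ hik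
    · simp only [Fin.val_castSucc] at hk0; omega
    · have := htail ⟨i, by omega⟩ hki hi; simp only at this; omega
  · rintro ⟨c, ⟨hc, hw⟩, k, hk, hk0, htail⟩
    refine ⟨fun i => if (i : ℕ) ≤ n then c i else 0, ⟨by simp, ⟨k, by omega⟩, fun i hi => ?_,
      by simpa [hk] using hk0, fun i hki hi => by simpa [hi] using htail i hki hi⟩, ?_⟩
    · simp only at hi ⊢; split_ifs <;> grind
    · rw [hw, zero_mul, add_zero]
      exact tupleVal_eq_digitSum fun i => by simp [i.is_le]

lemma IsDecomp.mem_Gset_iff (hxy : x < y) (hcop : x.Coprime y) {w : ℤ} {c : ℕ → ℕ} {m : ℤ}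
    (h : IsDecomp n x y w c m) : w ∈ Gset n x y ↔ m = 0 ∧ LdPattern n x c := by
  rw [mem_Gset_iff_exists_isDecomp hxy]
  constructor
  · rintro ⟨c', h', hpat⟩
    obtain ⟨hdig, hm⟩ := h.unique hcop h'
    exact ⟨hm, hpat.congr fun k hk => (hdig k hk).symm⟩
  · rintro ⟨rfl, hpat⟩
    exact ⟨c, h, hpat⟩

end StableDecomp

open StableDecomp in
theorem exists_unique_shift_mem_G_general
    (n x y : ℕ) (hx : 0 < x) (hxy : x < y) (hcop : Nat.Coprime x y)
    (v : ℕ) (hv : v < Fval n x y) :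
    (∃! k : ℕ, (v : ℤ) + (k : ℤ) * (Fval n x y : ℤ) ∈ Gset n x y) ∧
    (∀ k : ℕ, (v : ℤ) + (k : ℤ) * (Fval n x y : ℤ) ∈ Gset n x y →
      IsLeast {j : ℕ | ∃ (c : Fin (n + 1) → ℕ) (m : ℤ),
        IsStableDecomp n x y ((v : ℤ) + (j : ℤ) * (Fval n x y : ℤ)) c m ∧ 0 ≤ m} k) := by
  choose C M hCM using fun j : ℕ => exists_isDecomp (hx.trans hxy) hcop n (v + j * Fval n x y)
  have hstep j := (hCM j).add_Fval_step hxy hcop (by convert hCM (j + 1) using 1; push_cast; ring)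
  have hv' : ((v : ℤ) + (0 : ℕ) * Fval n x y) < Fval n x y := by simpa using hv
  have hM0 := (hCM 0).nonpos_of_lt_Fval hxy hv'
  obtain ⟨j₀, hj₀⟩ : ∃ j₀, IsLeast {j | 0 ≤ M j} j₀ :=
    ⟨_, isLeast_csInf ⟨y, (hCM y).nonneg_of_le (by nlinarith)⟩⟩
  have hG k := ((hCM k).mem_Gset_iff hxy hcop).trans <|
    eq_zero_and_iff_of_isLeast_nonneg (P := fun k => LdPattern n x (C k)) (fun j => (hstep j).1)
      (fun j => (hstep j).2) hM0
      (fun h0 => (h0 ▸ hCM 0).ldPattern_of_lt_Fval hx hxy hv') hj₀ k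
  have hS :
      {j : ℕ | ∃ c m, IsStableDecomp n x y (v + j * Fval n x y) c m ∧ 0 ≤ m} = {j | 0 ≤ M j} :=
    Set.ext fun j => (hCM j).exists_isStableDecomp_nonneg_iff hcop
  refine ⟨⟨j₀, (hG j₀).2 rfl, fun k hk => (hG k).1 hk⟩, fun k hk => ?_⟩
  rwa [hS, (hG k).1 hk]

/-- For every `v ∈ {0,…,F−1}` there is exactly one natural number
`k` such that `v + k·F ∈ G`; moreover this `k` is the smallest natural number
with `m(v + k·F) ≥ 0`. -/
theorem exists_unique_shift_mem_G
    (n x y : ℕ) (hn : 1 ≤ n) (hx : 0 < x) (hxy : x < y) (hcop : Nat.Coprime x y)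
    (v : ℕ) (hv : v < Fval n x y) :
    (∃! k : ℕ, (v : ℤ) + (k : ℤ) * (Fval n x y : ℤ) ∈ Gset n x y) ∧
    (∀ k : ℕ, (v : ℤ) + (k : ℤ) * (Fval n x y : ℤ) ∈ Gset n x y →
      IsLeast {j : ℕ | ∃ (c : Fin (n + 1) → ℕ) (m : ℤ),
        IsStableDecomp n x y ((v : ℤ) + (j : ℤ) * (Fval n x y : ℤ)) c m ∧ 0 ≤ m} k) :=
  exists_unique_shift_mem_G_general n x y hx hxy hcop v hv
end

section
/- Every v ∈ G satisfies 0 ≤ v ≤ x·Σ_{k=1}^n x^(n−k)·y^k, this maximum is attained by an element of G, and x·Σ_{k=1}^n x^(n−k)·y^k < x·F. -/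
/-! A digit `c_i ≤ y` left of the pivot contributes at most `y·x^(n-i)·y^i = x·x^(n-i-1)·y^(i+1)`,
so it is absorbed by the next weight, while a digit `c_i ≤ x` right of the pivot contributes at
most `x·x^(n-i)·y^i`; the pivot itself contributes nothing. Together these bounds use each weight
`x^(n-k)·y^k`, `1 ≤ k ≤ n`, exactly once. The bound is attained by the word `0 x x ⋯ x 0`, and
`F` exceeds the bound's sum by `x^n`. -/

open Finset

section DigitSums

variable {n x y : ℕ}

theorem sum_range_digits_le_of_le_base (d : ℕ → ℕ) {K : ℕ} (hK : K ≤ n)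
    (hd : ∀ i < K, d i ≤ y) :
    ∑ i ∈ range K, d i * x ^ (n - i) * y ^ i ≤ x * ∑ i ∈ Ico 1 (K + 1), x ^ (n - i) * y ^ i := by
  rw [sum_Ico_eq_sum_range, add_tsub_cancel_right, mul_sum]
  refine sum_le_sum fun i hi => ?_
  have hin : n - i = n - (1 + i) + 1 := by have := mem_range.mp hi; omega
  calc d i * x ^ (n - i) * y ^ i ≤ y * x ^ (n - i) * y ^ i := by
        gcongr; exact hd i (mem_range.mp hi)
    _ = x * (x ^ (n - (1 + i)) * y ^ (1 + i)) := by rw [hin]; ring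

theorem sum_range_digits_le_of_pivot (d : ℕ → ℕ) {K : ℕ} (hK : K ≤ n)
    (hlow : ∀ i < K, d i ≤ y) (hpivot : d K = 0) (hhigh : ∀ i, K < i → i ≤ n → d i ≤ x) :
    ∑ i ∈ range (n + 1), d i * x ^ (n - i) * y ^ i ≤ x * ∑ i ∈ Icc 1 n, x ^ (n - i) * y ^ i := by
  have hhigh_sum : ∑ i ∈ Ico (K + 1) (n + 1), d i * x ^ (n - i) * y ^ i
      ≤ x * ∑ i ∈ Ico (K + 1) (n + 1), x ^ (n - i) * y ^ i := by
    rw [mul_sum]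
    refine sum_le_sum fun i hi => ?_
    obtain ⟨hKi, hin⟩ := mem_Ico.mp hi
    rw [← mul_assoc]
    gcongr
    exact hhigh i (by omega) (by omega)
  calc ∑ i ∈ range (n + 1), d i * x ^ (n - i) * y ^ i
      = ∑ i ∈ range K, d i * x ^ (n - i) * y ^ i
          + ∑ i ∈ Ico (K + 1) (n + 1), d i * x ^ (n - i) * y ^ i := by
        rw [← sum_range_add_sum_Ico _ (by omega : K ≤ n + 1),
          sum_eq_sum_Ico_succ_bot (by omega : K < n + 1), hpivot]
        ring
    _ ≤ x * ∑ i ∈ Ico 1 (K + 1), x ^ (n - i) * y ^ i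
          + x * ∑ i ∈ Ico (K + 1) (n + 1), x ^ (n - i) * y ^ i :=
        add_le_add (sum_range_digits_le_of_le_base d hK hlow) hhigh_sum
    _ = x * ∑ i ∈ Icc 1 n, x ^ (n - i) * y ^ i := by
        rw [← mul_add, sum_Ico_consecutive _ (by omega) (by omega), Ico_add_one_right_eq_Icc]

end DigitSums

section Tuples

open Fin.NatCast

variable {n x y : ℕ}

theorem tupleVal_eq_sum_range (c : Fin (n + 2) → ℕ) :
    tupleVal n x y c = ∑ i ∈ range (n + 1), c (i : Fin (n + 2)) * x ^ (n - i) * y ^ i := by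
  rw [tupleVal, ← Fin.sum_univ_eq_sum_range]
  refine sum_congr rfl fun k _ => ?_
  rw [← Fin.val_castSucc, Fin.cast_val_eq_self]

theorem tupleVal_le_of_mem_Ld {c : Fin (n + 2) → ℕ} (hc : c ∈ Ld n x y) :
    tupleVal n x y c ≤ x * ∑ i ∈ Icc 1 n, x ^ (n - i) * y ^ i := by
  obtain ⟨-, k, hlow, hpivot, hhigh⟩ := hc
  have hk : (k : ℕ) ≤ n := Nat.lt_succ_iff.mp k.isLt
  have hval {i : ℕ} (hi : i ≤ n) : ((i : Fin (n + 2)) : ℕ) = i := Fin.val_cast_of_lt (by omega)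
  rw [tupleVal_eq_sum_range]
  refine sum_range_digits_le_of_pivot _ hk (fun i hi => ?_) ?_ (fun i hki hin => ?_)
  · exact (hlow _ (by rwa [hval (by omega)])).le
  · rwa [← Fin.val_castSucc, Fin.cast_val_eq_self]
  · exact (hhigh _ (by rwa [hval hin]) (by rwa [hval hin])).2

def maxTuple (n x : ℕ) : Fin (n + 2) → ℕ := fun i => if (i : ℕ) ∈ Icc 1 n then x else 0

theorem maxTuple_mem_Ld (hx : 0 < x) : maxTuple n x ∈ Ld n x y := by
  refine ⟨by simp [maxTuple], 0, fun i hi => absurd hi (Nat.not_lt_zero _), by simp [maxTuple],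
    fun i hi hin => ?_⟩
  simp only [maxTuple, mem_Icc]
  rw [if_pos ⟨hi, hin⟩]
  exact ⟨hx, le_rfl⟩

theorem tupleVal_maxTuple :
    tupleVal n x y (maxTuple n x) = x * ∑ i ∈ Icc 1 n, x ^ (n - i) * y ^ i := by
  have hIcc : range (n + 1) ∩ Icc 1 n = Icc 1 n :=
    inter_eq_right.mpr fun i hi => mem_range.mpr (by have := (mem_Icc.mp hi).2; omega)
  rw [tupleVal_eq_sum_range, mul_sum, ← hIcc, ← sum_ite_mem]
  refine sum_congr rfl fun i hi => ?_
  rw [maxTuple, Fin.val_cast_of_lt (by have := mem_range.mp hi; omega)]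
  split_ifs <;> ring

end Tuples

theorem Fval_eq_pow_add_sum_Icc (n x y : ℕ) :
    Fval n x y = x ^ n + ∑ k ∈ Icc 1 n, x ^ (n - k) * y ^ k := by
  rw [Fval, range_eq_Ico, sum_eq_sum_Ico_succ_bot n.succ_pos]
  simp [Ico_add_one_right_eq_Icc]

theorem G_bounds_general
    (n x y : ℕ) (hx : 0 < x) :
    (∀ v ∈ Gset n x y,
        0 ≤ v ∧ v ≤ (x * ∑ k ∈ Finset.Icc 1 n, x ^ (n - k) * y ^ k : ℕ)) ∧
    ((x * ∑ k ∈ Finset.Icc 1 n, x ^ (n - k) * y ^ k : ℕ) : ℤ) ∈ Gset n x y ∧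
    x * ∑ k ∈ Finset.Icc 1 n, x ^ (n - k) * y ^ k < x * Fval n x y := by
  refine ⟨?_, ⟨maxTuple n x, maxTuple_mem_Ld hx, by rw [tupleVal_maxTuple]⟩, ?_⟩
  · rintro v ⟨c, hc, rfl⟩
    exact ⟨Int.natCast_nonneg _, Int.ofNat_le.mpr (tupleVal_le_of_mem_Ld hc)⟩
  · rw [Fval_eq_pow_add_sum_Icc, mul_add]
    exact Nat.lt_add_of_pos_left (Nat.mul_pos hx (pow_pos hx n))

/-- Every `v ∈ G` satisfies `0 ≤ v ≤ x·Σ_{k=1}^n x^(n−k)·y^k`,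
this maximum is attained by an element of `G`, and
`x·Σ_{k=1}^n x^(n−k)·y^k < x·F`. -/
theorem G_bounds
    (n x y : ℕ) (hn : 1 ≤ n) (hx : 0 < x) (hxy : x < y) (hcop : Nat.Coprime x y) :
    (∀ v ∈ Gset n x y,
        0 ≤ v ∧ v ≤ (x * ∑ k ∈ Finset.Icc 1 n, x ^ (n - k) * y ^ k : ℕ)) ∧
    ((x * ∑ k ∈ Finset.Icc 1 n, x ^ (n - k) * y ^ k : ℕ) : ℤ) ∈ Gset n x y ∧
    x * ∑ k ∈ Finset.Icc 1 n, x ^ (n - k) * y ^ k < x * Fval n x y :=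
  G_bounds_general n x y hx
end

section
/- For every integer t there is a unique integer m such that t + m·F ∈ G, and this m satisfies ⌈−t/F⌉ ≤ m ≤ ⌈−t/F⌉ + x − 1. -/
/-!
Write `w i = x ^ (n - i) * y ^ i`, so that `y * w i = x * w (i + 1)` and `F = ∑ w i`. Since `x` and
`y` are coprime, every integer vector `d` with `∑ d i * w i = 0` is an integer combination of these
"carries": `d i = x * ν i - y * ν (i + 1)` with `ν 0 = ν (n + 1) = 0`. If two words of `L_d^n` have
values differing by `m * F` with `m ≥ 0`, apply this to `d = a - b - m`: the digit bounds force
`ν ≥ 0` from the left; from the right, the block of digits at most `x` after the zero of `a` forces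
`ν` to vanish there when `m ≥ 1`, contradicting the zero digit itself. So `m = 0`, and then `ν = 0`
and `a = b`. Hence the words of `L_d^n`, of which there are `∑ y ^ k * x ^ (n - k) = F` (choose the
position `k` of the zero), have pairwise distinct values modulo `F`: they form a complete residue
system. Finally every value lies in `[0, x * F)`, which pins `m` down to the stated window.
-/

-- For `i : ℕ`, `c ↑i` is the digit of `c : Fin (n + 2) → ℕ` at position `i % (n + 2)`.
open Finset Fin.NatCast

section Carries

variable {x y : ℤ} {n : ℕ} {ν : ℕ → ℤ}

theorem exists_carries_of_sum_eq_zero (hcop : IsCoprime x y) (hx : x ≠ 0) (hy : y ≠ 0)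
    {d : ℕ → ℤ} (hd : ∑ i ∈ range (n + 1), d i * x ^ (n - i) * y ^ i = 0) :
    ∃ ν : ℕ → ℤ, ν 0 = 0 ∧ ν (n + 1) = 0 ∧ ∀ i ≤ n, d i = x * ν i - y * ν (i + 1) := by
  set S : ℕ → ℤ := fun i => ∑ j ∈ range i, d j * x ^ (n - j) * y ^ j with hS
  -- `x ^ (n + 1 - i)` divides every term of `S i`, and `y ^ i` every term of `S (n + 1) - S i`
  have hdvd : ∀ i ≤ n + 1, x ^ (n + 1 - i) * y ^ i ∣ S i := by
    intro i hi
    refine hcop.pow.mul_dvd ?_ ?_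
    · exact dvd_sum fun j hj => (dvd_mul_of_dvd_right
        (pow_dvd_pow x (by have := mem_range.1 hj; omega)) _).mul_right _
    · have htail : S i = -∑ j ∈ Ico i (n + 1), d j * x ^ (n - j) * y ^ j := by
        rw [eq_neg_iff_add_eq_zero, hS, sum_range_add_sum_Ico _ hi, hd]
      rw [htail, dvd_neg]
      exact dvd_sum fun j hj => dvd_mul_of_dvd_right (pow_dvd_pow y (mem_Ico.1 hj).1) _
  choose! ν hν using fun i hi => dvd_neg.2 (hdvd i hi)
  refine ⟨ν, ?_, ?_, fun i hi => ?_⟩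
  · simpa [hS, hx] using hν 0 (by omega)
  · simpa [hS, hd, hx, hy] using hν (n + 1) le_rfl
  have hSi := hν i (by omega)
  have hSi1 := hν (i + 1) (by omega)
  have hrec : S (i + 1) = S i + d i * x ^ (n - i) * y ^ i := sum_range_succ _ _
  rw [Nat.add_sub_add_right] at hSi1
  rw [show n + 1 - i = n - i + 1 by omega] at hSi
  apply mul_left_cancel₀ (mul_ne_zero (pow_ne_zero (n - i) hx) (pow_ne_zero i hy))
  linear_combination -hrec - hSi1 + hSi

theorem carries_nonneg (hx : 0 ≤ x) (hy : 0 < y) (h0 : ν 0 = 0)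
    (h : ∀ i < n, x * ν i - y * ν (i + 1) < y) : ∀ i ≤ n, 0 ≤ ν i := by
  intro i hi
  induction i with
  | zero => exact h0.ge
  | succ i ih =>
    have := h i hi
    have := mul_nonneg hx (ih (by omega))
    by_contra! hneg
    nlinarith

theorem carries_eq_zero_of_lt (hx : 0 < x) {k : ℕ} (hν : ∀ i ≤ n, 0 ≤ ν i) (htop : ν n = 0)
    (h : ∀ i, k < i → i < n → x * ν i - y * ν (i + 1) < x) :
    ∀ i, k < i → i ≤ n → ν i = 0 := by
  intro i hki hin
  induction hin using Nat.decreasingInduction with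
  | self => exact htop
  | of_succ i hin ih =>
    have := h i hki hin
    rw [ih (by omega)] at this
    have := hν i hin.le
    nlinarith

end Carries

theorem digits_eq_of_sum_sub_eq_zero {n x y k : ℕ} {a b : ℕ → ℕ} {m : ℤ} (hcop : Nat.Coprime x y)
    (hx : 0 < x) (hk : k ≤ n) (ha : ∀ i ≤ n, a i < y) (hak : a k = 0)
    (hax : ∀ i, k < i → i ≤ n → a i ≤ x) (hb : ∀ i ≤ n, b i < y) (hm : 0 ≤ m)
    (h : ∑ i ∈ range (n + 1), ((a i : ℤ) - b i - m) * (x : ℤ) ^ (n - i) * (y : ℤ) ^ i = 0) :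
    m = 0 ∧ ∀ i ≤ n, a i = b i := by
  have hy : (0 : ℤ) < y := by have := ha k hk; omega
  have hx' : (0 : ℤ) < x := by exact_mod_cast hx
  obtain ⟨ν, hν0, hνtop, hd⟩ :=
    exists_carries_of_sum_eq_zero (Nat.isCoprime_iff_coprime.2 hcop) hx'.ne' hy.ne' h
  have hνnonneg : ∀ i ≤ n + 1, 0 ≤ ν i :=
    carries_nonneg hx'.le hy hν0 fun i hi => by
      have := hd i (by omega); have := ha i (by omega); omega
  have hm0 : m = 0 := by
    by_contra hm0
    have hzero := carries_eq_zero_of_lt (y := y) hx' hνnonneg hνtop (k := k) fun i hki hin => by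
      have := hd i (by omega); have := hax i hki (by omega); omega
    have := hd k hk
    rw [hzero (k + 1) (by omega) (by omega), hak] at this
    have := mul_nonneg hx'.le (hνnonneg k (by omega))
    omega
  subst hm0
  have hνnonpos : ∀ i ≤ n + 1, 0 ≤ -ν i :=
    carries_nonneg hx'.le hy (by simp [hν0]) fun i hi => by
      have := hd i (by omega); have := hb i (by omega); linarith
  refine ⟨rfl, fun i hi => ?_⟩
  have := hd i hi
  rw [le_antisymm (neg_nonneg.1 (hνnonpos i (by omega))) (hνnonneg i (by omega)),
    le_antisymm (neg_nonneg.1 (hνnonpos (i + 1) (by omega))) (hνnonneg (i + 1) (by omega))] at this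
  omega

theorem sum_digits_add_pow_le {n x y k : ℕ} {a : ℕ → ℕ} (hk : k ≤ n) (hlow : ∀ i < k, a i ≤ y)
    (hak : a k = 0) (hhigh : ∀ i, k < i → i ≤ n → a i ≤ x) :
    ∑ i ∈ range (n + 1), a i * x ^ (n - i) * y ^ i + x ^ (n + 1) ≤ x * Fval n x y := by
  set w : ℕ → ℕ := fun i => x ^ (n - i) * y ^ i with hw
  have hcarry : ∀ i < n, y * w i = x * w (i + 1) := fun i hi => by
    simp only [hw]
    rw [show n - i = n - (i + 1) + 1 by omega, pow_succ, pow_succ]; ring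
  have hsplit : ∑ i ∈ range (n + 1), a i * x ^ (n - i) * y ^ i
      = ∑ i ∈ range k, a i * w i + ∑ i ∈ Ico k n, a (i + 1) * w (i + 1) := by
    simp_rw [mul_assoc]
    rw [← sum_range_add_sum_Ico _ (by omega : k ≤ n + 1),
      sum_eq_sum_Ico_succ_bot (by omega : k < n + 1), hak, zero_mul, zero_add,
      sum_Ico_add' (fun i => a i * w i)]
  have hF : x * Fval n x y = x * ∑ i ∈ range n, w (i + 1) + x ^ (n + 1) := by
    rw [Fval, sum_range_succ', mul_add, pow_succ']; simp [hw]
  rw [hsplit, hF, ← sum_range_add_sum_Ico _ hk, mul_add, mul_sum, mul_sum]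
  gcongr ?_ + ?_ + _
  · refine sum_le_sum fun i hi => ?_
    rw [← hcarry i (by have := mem_range.1 hi; omega)]
    exact Nat.mul_le_mul_right _ (hlow i (mem_range.1 hi))
  · refine sum_le_sum fun i hi => ?_
    have := mem_Ico.1 hi
    exact Nat.mul_le_mul_right _ (hhigh (i + 1) (by omega) (by omega))

section Ld

variable {n x y : ℕ} {c c' : Fin (n + 2) → ℕ}

theorem tupleVal_eq_sum (c : Fin (n + 2) → ℕ) :
    tupleVal n x y c = ∑ i ∈ range (n + 1), c ↑i * x ^ (n - i) * y ^ i := by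
  rw [tupleVal, ← Fin.sum_univ_eq_sum_range (fun i => c ↑i * x ^ (n - i) * y ^ i)]
  refine sum_congr rfl fun k _ => ?_
  rw [show ((k : ℕ) : Fin (n + 2)) = k.castSucc by ext; simp]

theorem exists_digits_of_mem_Ld (hc : c ∈ Ld n x y) :
    ∃ k ≤ n, (∀ i < k, c ↑i < y) ∧ c ↑k = 0 ∧ ∀ i, k < i → i ≤ n → c ↑i ≤ x := by
  obtain ⟨-, k, hlow, hk, hhigh⟩ := hc
  have hcast : ∀ i ≤ n + 1, ((i : Fin (n + 2)) : ℕ) = i := fun i hi =>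
    Fin.val_cast_of_lt (by omega)
  have hk' : ((k : ℕ) : Fin (n + 2)) = k.castSucc := by ext; simp
  refine ⟨k, by omega, fun i hi => hlow _ ?_, by rwa [hk'], fun i hki hin => (hhigh _ ?_ ?_).2⟩
  all_goals rwa [hcast i (by omega)]

theorem digit_lt_of_mem_Ld (hxy : x < y) (hc : c ∈ Ld n x y) : ∀ i ≤ n, c ↑i < y := by
  obtain ⟨k, hkn, hlow, hk, hhigh⟩ := exists_digits_of_mem_Ld hc
  intro i hi
  rcases lt_trichotomy i k with h | rfl | h
  · exact hlow i h
  · omega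
  · have := hhigh i h hi; omega

theorem tupleVal_lt (hx : 0 < x) (hc : c ∈ Ld n x y) : tupleVal n x y c < x * Fval n x y := by
  obtain ⟨k, hkn, hlow, hk, hhigh⟩ := exists_digits_of_mem_Ld hc
  have := sum_digits_add_pow_le hkn (fun i hi => (hlow i hi).le) hk hhigh
  rw [tupleVal_eq_sum]
  have : 0 < x ^ (n + 1) := by positivity
  omega

theorem eq_of_mem_Ld_of_tupleVal_eq_add (hcop : Nat.Coprime x y) (hx : 0 < x) (hxy : x < y)
    (hc : c ∈ Ld n x y) (hc' : c' ∈ Ld n x y) {m : ℤ}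
    (h : (tupleVal n x y c : ℤ) = tupleVal n x y c' + m * Fval n x y) : m = 0 ∧ c = c' := by
  wlog hm : 0 ≤ m generalizing c c' m
  · obtain ⟨hm0, rfl⟩ := this hc' hc (m := -m) (by linarith) (by linarith)
    exact ⟨by linarith, rfl⟩
  obtain ⟨k, hkn, -, hk, hhigh⟩ := exists_digits_of_mem_Ld hc
  have hsum :
      ∑ i ∈ range (n + 1), ((c ↑i : ℤ) - c' ↑i - m) * (x : ℤ) ^ (n - i) * (y : ℤ) ^ i = 0 := by
    rw [tupleVal_eq_sum, tupleVal_eq_sum, Fval] at h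
    push_cast at h
    simp only [sub_mul, sum_sub_distrib, mul_sum, mul_assoc] at h ⊢
    linear_combination h
  obtain ⟨hm0, hdig⟩ := digits_eq_of_sum_sub_eq_zero hcop hx hkn (digit_lt_of_mem_Ld hxy hc) hk
    hhigh (digit_lt_of_mem_Ld hxy hc') hm hsum
  refine ⟨hm0, funext fun j => ?_⟩
  rcases Fin.eq_castSucc_or_eq_last j with ⟨j, rfl⟩ | rfl
  · have := hdig j (by omega)
    simpa using this
  · rw [hc.1, hc'.1]

end Ld

section Count

variable {n x y : ℕ} {c : Fin (n + 2) → ℕ}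

/-- The digit ranges of the words of `L_d^n` whose last `0` before position `n + 1` is at
position `k`. -/
def ldBox (n x y k : ℕ) (i : Fin (n + 2)) : Finset ℕ :=
  if (i : ℕ) = k ∨ n < (i : ℕ) then {0} else if (i : ℕ) < k then range y else Icc 1 x

theorem mem_ldBox {k : ℕ} (hk : k ≤ n) {i : Fin (n + 2)} {d : ℕ} :
    d ∈ ldBox n x y k i ↔
      ((i : ℕ) < k → d < y) ∧ ((i : ℕ) = k ∨ n < (i : ℕ) → d = 0) ∧
        (k < (i : ℕ) → (i : ℕ) ≤ n → 1 ≤ d ∧ d ≤ x) := by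
  unfold ldBox
  split_ifs <;> simp only [mem_range, mem_singleton, mem_Icc] <;> omega

theorem card_ldBox {k : ℕ} (i : Fin (n + 2)) :
    #(ldBox n x y k i) = if (i : ℕ) = k ∨ n < (i : ℕ) then 1 else if (i : ℕ) < k then y else x := by
  unfold ldBox
  split_ifs <;> simp

def ldFinset (n x y : ℕ) : Finset (Fin (n + 2) → ℕ) :=
  (range (n + 1)).biUnion fun k => Fintype.piFinset (ldBox n x y k)

theorem mem_ldFinset : c ∈ ldFinset n x y ↔ c ∈ Ld n x y := by
  simp only [ldFinset, mem_biUnion, mem_range, Fintype.mem_piFinset]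
  constructor
  · rintro ⟨k, hk, hbox⟩
    simp only [mem_ldBox (Nat.le_of_lt_succ hk)] at hbox
    refine ⟨(hbox _).2.1 (Or.inr (by simp)), ⟨k, hk⟩, fun i hi => (hbox i).1 hi,
      (hbox _).2.1 (Or.inl (by simp)), fun i hki hin => (hbox i).2.2 hki hin⟩
  · rintro ⟨hlast, k, hlow, hk, hhigh⟩
    refine ⟨k, k.isLt, fun i => (mem_ldBox k.is_le).2 ⟨hlow i, fun hi => ?_, hhigh i⟩⟩
    rcases hi with hi | hi
    · rwa [show i = k.castSucc by ext; simpa using hi]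
    · rwa [show i = Fin.last (n + 1) by ext; simp; omega]

theorem card_piFinset_ldBox {k : ℕ} (hk : k ≤ n) :
    #(Fintype.piFinset (ldBox n x y k)) = x ^ (n - k) * y ^ k := by
  set g : ℕ → ℕ := fun i => if i = k ∨ n < i then 1 else if i < k then y else x with hg
  rw [Fintype.card_piFinset, prod_congr rfl fun i _ => card_ldBox i,
    Fin.prod_univ_eq_prod_range g, show n + 2 = k + (n - k + 1) + 1 by omega,
    prod_range_succ, prod_range_add, prod_range_succ']
  have hlow : ∏ i ∈ range k, g i = y ^ k := by
    refine (prod_congr rfl fun i hi => ?_).trans (by rw [prod_const, card_range])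
    have := mem_range.1 hi
    simp only [hg]
    rw [if_neg (by omega), if_pos this]
  have hhigh : ∏ j ∈ range (n - k), g (k + (j + 1)) = x ^ (n - k) := by
    refine (prod_congr rfl fun j hj => ?_).trans (by rw [prod_const, card_range])
    have := mem_range.1 hj
    simp only [hg]
    rw [if_neg (by omega), if_neg (by omega)]
  have hzero : g (k + 0) = 1 := by simp [hg]
  have htop : g (k + (n - k + 1)) = 1 := by
    simp only [hg]
    rw [if_pos (by omega)]
  rw [hlow, hhigh, hzero, htop]
  ring

theorem card_ldFinset : #(ldFinset n x y) = Fval n x y := by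
  rw [ldFinset, card_biUnion, Fval]
  · exact sum_congr rfl fun k hk => card_piFinset_ldBox (by have := mem_range.1 hk; omega)
  intro k hk k' hk' hne
  rw [Function.onFun, disjoint_left]
  intro c h h'
  simp only [coe_range, Set.mem_Iio] at hk hk'
  have hp := (mem_ldBox (by omega)).1 (Fintype.mem_piFinset.1 h ⟨max k k', by omega⟩)
  have hp' := (mem_ldBox (by omega)).1 (Fintype.mem_piFinset.1 h' ⟨max k k', by omega⟩)
  simp only at hp hp'
  omega

end Count

section Gset

variable {n x y : ℕ}

theorem Fval_pos (hx : 0 < x) : 0 < Fval n x y :=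
  sum_pos' (fun _ _ => Nat.zero_le _) ⟨0, by simp, by positivity⟩

theorem nonneg_and_lt_of_mem_Gset (hx : 0 < x) {v : ℤ} (hv : v ∈ Gset n x y) :
    0 ≤ v ∧ v < x * Fval n x y := by
  obtain ⟨c, hc, rfl⟩ := hv
  exact ⟨Int.natCast_nonneg _, by exact_mod_cast tupleVal_lt hx hc⟩

theorem eq_of_add_mul_mem_Gset (hcop : Nat.Coprime x y) (hx : 0 < x) (hxy : x < y) {t m m' : ℤ}
    (hm : t + m * Fval n x y ∈ Gset n x y) (hm' : t + m' * Fval n x y ∈ Gset n x y) : m = m' := by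
  obtain ⟨c, hc, hct⟩ := hm
  obtain ⟨c', hc', hct'⟩ := hm'
  have := (eq_of_mem_Ld_of_tupleVal_eq_add hcop hx hxy hc hc' (m := m - m')
    (by rw [hct, hct']; ring)).1
  omega

theorem exists_add_mul_mem_Gset (hcop : Nat.Coprime x y) (hx : 0 < x) (hxy : x < y) (t : ℤ) :
    ∃ m : ℤ, t + m * Fval n x y ∈ Gset n x y := by
  have : NeZero (Fval n x y) := ⟨(Fval_pos hx).ne'⟩
  set res : (Fin (n + 2) → ℕ) → ZMod (Fval n x y) := fun c => ((tupleVal n x y c : ℤ) : ZMod _)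
  have hinj : Set.InjOn res (ldFinset n x y) := by
    intro c hc c' hc' h
    obtain ⟨m, hm⟩ := ((ZMod.intCast_eq_intCast_iff _ _ _).1 h).dvd
    exact (eq_of_mem_Ld_of_tupleVal_eq_add hcop hx hxy (mem_ldFinset.1 hc')
      (mem_ldFinset.1 hc) (m := m) (by linarith)).2.symm
  have hsurj : (ldFinset n x y).image res = univ :=
    eq_univ_of_card _ (by rw [card_image_of_injOn hinj, card_ldFinset, ZMod.card])
  obtain ⟨c, hc, hct⟩ := mem_image.1 (hsurj ▸ mem_univ (t : ZMod (Fval n x y)))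
  obtain ⟨m, hm⟩ := ((ZMod.intCast_eq_intCast_iff _ _ _).1 hct).symm.dvd
  exact ⟨m, c, mem_ldFinset.1 hc, by linarith⟩

end Gset

theorem ceil_neg_div_le_and_le_add_sub_one {t m a : ℤ} {F : ℕ} (hF : 0 < F)
    (h0 : 0 ≤ t + m * F) (h1 : t + m * F < a * F) :
    ⌈(-t : ℚ) / (F : ℚ)⌉ ≤ m ∧ m ≤ ⌈(-t : ℚ) / (F : ℚ)⌉ + a - 1 := by
  have hFQ : (0 : ℚ) < F := by exact_mod_cast hF
  constructor
  · rw [Int.ceil_le, div_le_iff₀ hFQ]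
    exact_mod_cast (by linarith : -t ≤ m * F)
  · have : m - a < ⌈(-t : ℚ) / (F : ℚ)⌉ := by
      rw [Int.lt_ceil, lt_div_iff₀ hFQ]
      exact_mod_cast (by linarith : (m - a) * F < -t)
    omega

theorem exists_unique_int_shift_mem_G_general
    (n x y : ℕ) (hx : 0 < x) (hxy : x < y) (hcop : Nat.Coprime x y)
    (t : ℤ) :
    (∃! m : ℤ, t + m * (Fval n x y : ℤ) ∈ Gset n x y) ∧
    (∀ m : ℤ, t + m * (Fval n x y : ℤ) ∈ Gset n x y →
      ⌈(-t : ℚ) / (Fval n x y : ℚ)⌉ ≤ m ∧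
        m ≤ ⌈(-t : ℚ) / (Fval n x y : ℚ)⌉ + (x : ℤ) - 1) := by
  obtain ⟨m, hm⟩ := exists_add_mul_mem_Gset hcop hx hxy t
  refine ⟨⟨m, hm, fun m' hm' => eq_of_add_mul_mem_Gset hcop hx hxy hm' hm⟩, fun m' hm' => ?_⟩
  obtain ⟨h0, h1⟩ := nonneg_and_lt_of_mem_Gset hx hm'
  exact ceil_neg_div_le_and_le_add_sub_one (Fval_pos hx) h0 h1

/-- For every integer `t` there is a unique integer `m` such that
`t + m·F ∈ G`, and this `m` satisfies `⌈−t/F⌉ ≤ m ≤ ⌈−t/F⌉ + x − 1`. -/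
theorem exists_unique_int_shift_mem_G
    (n x y : ℕ) (hn : 1 ≤ n) (hx : 0 < x) (hxy : x < y) (hcop : Nat.Coprime x y)
    (t : ℤ) :
    (∃! m : ℤ, t + m * (Fval n x y : ℤ) ∈ Gset n x y) ∧
    (∀ m : ℤ, t + m * (Fval n x y : ℤ) ∈ Gset n x y →
      ⌈(-t : ℚ) / (Fval n x y : ℚ)⌉ ≤ m ∧
        m ≤ ⌈(-t : ℚ) / (Fval n x y : ℚ)⌉ + (x : ℤ) - 1) :=
  exists_unique_int_shift_mem_G_general n x y hx hxy hcop t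
end

section
/- Let v_k ∈ ℤ^n (for k ∈ {1,…,n}) be the vectors v_k := y·e_{k−1} − (x+y)·e_k + x·e_{k+1}, where e_1,…,e_n is the standard basis of ℤ^n and e_0 := 0, e_{n+1} := 0. Then the quotient group ℤ^n / ⟨v_1,…,v_n⟩ is cyclic of order F = Σ_{k=0}^n x^(n−k)·y^k. (This quotient is the sandpile group of the path multigraph P^{x,y}_n.) -/
/-- The vector `v_k = y·e_{k−1} − (x+y)·e_k + x·e_{k+1}` in `ℤ^n`, where
`e_1,…,e_n` is the standard basis (`e_0 = e_{n+1} = 0`); here coordinates and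
indices are 0-based, so `k : Fin n` stands for the vertex `u_{k+1}`. -/
def vvec (n x y : ℕ) (k : Fin n) : Fin n → ℤ := fun i =>
  (if (i : ℕ) + 1 = (k : ℕ) then (y : ℤ) else 0)
    - (if i = k then ((x : ℤ) + (y : ℤ)) else 0)
    + (if (i : ℕ) = (k : ℕ) + 1 then (x : ℤ) else 0)

/-!
Put `d_k := e_{k+1} - e_k` for `k = 0, …, n` (with `e_0 = e_{n+1} = 0`). Then
`v_k = x d_k - y d_{k-1}` and `Σ d_k = 0`, so in the quotient `x^j d_{i+j} = y^j d_i`.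
Multiplying `Σ d_k = 0` by `x^n` gives `F d_0 = 0`, and by `y^n` gives `F d_n = 0`. Since
`x^n d_n = y^n d_0` and `x^n` is coprime to `F ≡ y^n (mod x)`, `d_n ∈ ⟨d_0⟩`; then each `d_k`
lies in `⟨d_0⟩` because `x^k d_k = y^k d_0` and `y^(n-k) d_k = x^(n-k) d_n` with `x^k`, `y^(n-k)`
coprime. So the quotient is generated by `d_0 = e_1`, whose order divides `F`. Conversely
`e_i ↦ Σ_{k<i} x^(n-k) y^k` kills every `v_k` modulo `F` and sends `e_1` to the unit `x^n` of
`ℤ/F`, so the order of `e_1` is exactly `F`.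
-/

open Finset

theorem AddSubgroup.mem_of_isCoprime_zsmul_mem {M : Type*} [AddCommGroup M] {H : AddSubgroup M}
    {a b : ℤ} {g : M} (hab : IsCoprime a b) (ha : a • g ∈ H) (hb : b • g ∈ H) : g ∈ H := by
  obtain ⟨u, v, huv⟩ := hab
  have hg : g = u • a • g + v • b • g := by rw [smul_smul, smul_smul, ← add_smul, huv, one_smul]
  rw [hg]
  exact add_mem (zsmul_mem ha u) (zsmul_mem hb v)

theorem isCoprime_pow_sum_pow_mul_pow {R : Type*} [CommRing R] {x y : R} (h : IsCoprime x y)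
    (n : ℕ) : IsCoprime (x ^ n) (∑ k ∈ range (n + 1), x ^ (n - k) * y ^ k) := by
  apply IsCoprime.pow_left
  obtain ⟨c, hc⟩ : x ∣ ∑ k ∈ range n, x ^ (n - k) * y ^ k :=
    dvd_sum fun k hk => (dvd_pow_self x (Nat.sub_ne_zero_of_lt (mem_range.mp hk))).mul_right _
  rw [sum_range_succ, hc, Nat.sub_self, pow_zero, one_mul, add_comm]
  exact h.pow_right.add_mul_left_right c

section Chain

variable {M : Type*} [AddCommGroup M] {x y : ℤ} {n : ℕ} {d : ℕ → M}

theorem pow_smul_chain (hrel : ∀ k < n, x • d (k + 1) = y • d k) {i j : ℕ} (hij : i + j ≤ n) :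
    x ^ j • d (i + j) = y ^ j • d i := by
  induction j with
  | zero => simp
  | succ j ih =>
    calc x ^ (j + 1) • d (i + j + 1) = x ^ j • x • d (i + j + 1) := by rw [pow_succ, mul_smul]
      _ = y • x ^ j • d (i + j) := by rw [hrel _ (by omega), smul_comm]
      _ = y ^ (j + 1) • d i := by rw [ih (by omega), ← mul_smul, pow_succ']

theorem pow_smul_chain_zero (hrel : ∀ k < n, x • d (k + 1) = y • d k) {j : ℕ} (hj : j ≤ n) :
    x ^ j • d j = y ^ j • d 0 := by
  simpa using pow_smul_chain hrel (i := 0) (j := j) (by omega)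

theorem pow_smul_chain_last (hrel : ∀ k < n, x • d (k + 1) = y • d k) {k : ℕ} (hk : k ≤ n) :
    x ^ (n - k) • d n = y ^ (n - k) • d k := by
  simpa [Nat.add_sub_cancel' hk] using pow_smul_chain hrel (i := k) (j := n - k) (by omega)

theorem sum_pow_mul_pow_smul_chain_zero (hrel : ∀ k < n, x • d (k + 1) = y • d k)
    (hsum : ∑ k ∈ range (n + 1), d k = 0) :
    (∑ k ∈ range (n + 1), x ^ (n - k) * y ^ k) • d 0 = 0 := by
  calc (∑ k ∈ range (n + 1), x ^ (n - k) * y ^ k) • d 0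
      = ∑ k ∈ range (n + 1), x ^ (n - k) • y ^ k • d 0 := by simp only [sum_smul, mul_smul]
    _ = ∑ k ∈ range (n + 1), x ^ n • d k := sum_congr rfl fun k hk => by
        have hk : k ≤ n := mem_range_succ_iff.mp hk
        rw [← pow_smul_chain_zero hrel hk, smul_smul, ← pow_add, Nat.sub_add_cancel hk]
    _ = 0 := by rw [← smul_sum, hsum, smul_zero]

theorem sum_pow_mul_pow_smul_chain_last (hrel : ∀ k < n, x • d (k + 1) = y • d k)
    (hsum : ∑ k ∈ range (n + 1), d k = 0) :
    (∑ k ∈ range (n + 1), x ^ (n - k) * y ^ k) • d n = 0 := by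
  calc (∑ k ∈ range (n + 1), x ^ (n - k) * y ^ k) • d n
      = ∑ k ∈ range (n + 1), y ^ k • x ^ (n - k) • d n := by
        simp only [sum_smul, mul_comm (x ^ _), mul_smul]
    _ = ∑ k ∈ range (n + 1), y ^ n • d k := sum_congr rfl fun k hk => by
        have hk : k ≤ n := mem_range_succ_iff.mp hk
        rw [pow_smul_chain_last hrel hk, smul_smul, ← pow_add, Nat.add_sub_cancel' hk]
    _ = 0 := by rw [← smul_sum, hsum, smul_zero]

theorem chain_mem_zmultiples_zero (hxy : IsCoprime x y) (hrel : ∀ k < n, x • d (k + 1) = y • d k)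
    (hsum : ∑ k ∈ range (n + 1), d k = 0) {k : ℕ} (hk : k ≤ n) :
    d k ∈ AddSubgroup.zmultiples (d 0) := by
  have hd0 (a : ℤ) : a • d 0 ∈ AddSubgroup.zmultiples (d 0) :=
    zsmul_mem (AddSubgroup.mem_zmultiples _) a
  have hdn : d n ∈ AddSubgroup.zmultiples (d 0) :=
    AddSubgroup.mem_of_isCoprime_zsmul_mem (isCoprime_pow_sum_pow_mul_pow hxy n)
      (by rw [pow_smul_chain_zero hrel le_rfl]; exact hd0 _)
      (by rw [sum_pow_mul_pow_smul_chain_last hrel hsum]; exact zero_mem _)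
  exact AddSubgroup.mem_of_isCoprime_zsmul_mem (hxy.pow (m := k) (n := n - k))
    (by rw [pow_smul_chain_zero hrel hk]; exact hd0 _)
    (by rw [← pow_smul_chain_last hrel hk]; exact zsmul_mem hdn _)

end Chain

/-- The paper's `e_i`, indexed from `1`, so that `unitVec n 0` and `unitVec n (n + 1)` are its
`e_0 = e_{n+1} = 0`. -/
def unitVec (n i : ℕ) : Fin n → ℤ := fun j => if (j : ℕ) + 1 = i then 1 else 0

def weight (n x y m : ℕ) : ℕ := ∑ k ∈ range m, x ^ (n - k) * y ^ k

def weightHom (n x y : ℕ) : (Fin n → ℤ) →+ ZMod (Fval n x y) :=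
  (Fintype.linearCombination ℤ fun j : Fin n =>
    (weight n x y (j + 1) : ZMod (Fval n x y))).toAddMonoidHom

abbrev sandpileLattice (n x y : ℕ) : AddSubgroup (Fin n → ℤ) :=
  AddSubgroup.closure (Set.range (vvec n x y))

def chipDiff (n x y k : ℕ) : (Fin n → ℤ) ⧸ sandpileLattice n x y :=
  QuotientAddGroup.mk (unitVec n (k + 1) - unitVec n k)

section Sandpile

variable {n x y : ℕ}

theorem unitVec_zero : unitVec n 0 = 0 := by
  ext j
  simp [unitVec]

theorem unitVec_succ_last : unitVec n (n + 1) = 0 := by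
  ext j
  simp [unitVec, j.isLt.ne]

theorem unitVec_succ (j : Fin n) : unitVec n (j + 1) = Pi.single j 1 := by
  ext i
  simp [unitVec, Pi.single_apply, Fin.ext_iff]

theorem vvec_eq_sub_unitVec (k : Fin n) : vvec n x y k =
    (x : ℤ) • (unitVec n (k + 2) - unitVec n (k + 1))
      - (y : ℤ) • (unitVec n (k + 1) - unitVec n k) := by
  ext i
  simp only [vvec, unitVec, Pi.sub_apply, Pi.smul_apply, smul_eq_mul]
  split_ifs <;> omega

theorem weight_succ (m : ℕ) : weight n x y (m + 1) = weight n x y m + x ^ (n - m) * y ^ m :=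
  sum_range_succ _ _

theorem weightHom_unitVec {m : ℕ} (hm : m ≤ n + 1) :
    weightHom n x y (unitVec n m) = weight n x y m := by
  obtain _ | m := m
  · simp [unitVec_zero, weight]
  obtain hlt | rfl := Nat.lt_or_eq_of_le (Nat.le_of_succ_le_succ hm)
  · rw [show m + 1 = ((⟨m, hlt⟩ : Fin n) : ℕ) + 1 from rfl, unitVec_succ]
    simp [weightHom]
  · rw [unitVec_succ_last, map_zero]
    exact (ZMod.natCast_self _).symm

theorem weightHom_vvec (k : Fin n) : weightHom n x y (vvec n x y k) = 0 := by
  obtain ⟨r, hr⟩ : ∃ r, n - k = r + 1 := ⟨n - (k + 1), by omega⟩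
  rw [vvec_eq_sub_unitVec, map_sub, map_zsmul, map_zsmul, map_sub, map_sub,
    weightHom_unitVec (by omega), weightHom_unitVec (by omega), weightHom_unitVec (by omega),
    weight_succ, weight_succ, show n - (k + 1) = r by omega, hr, zsmul_eq_mul, zsmul_eq_mul]
  push_cast
  ring

theorem chipDiff_chain {k : ℕ} (hk : k < n) :
    (x : ℤ) • chipDiff n x y (k + 1) = (y : ℤ) • chipDiff n x y k := by
  rw [← sub_eq_zero]
  have hv : vvec n x y ⟨k, hk⟩ ∈ sandpileLattice n x y :=
    AddSubgroup.subset_closure (Set.mem_range_self _)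
  rw [vvec_eq_sub_unitVec] at hv
  simpa [chipDiff] using (QuotientAddGroup.eq_zero_iff _).mpr hv

theorem sum_chipDiff : ∑ k ∈ range (n + 1), chipDiff n x y k = 0 := by
  simp only [chipDiff, ← QuotientAddGroup.mk_sum, sum_range_sub (unitVec n), unitVec_succ_last,
    unitVec_zero, sub_zero, QuotientAddGroup.mk_zero]

theorem mem_zmultiples_chipDiff_zero (hxy : Nat.Coprime x y)
    (z : (Fin n → ℤ) ⧸ sandpileLattice n x y) : z ∈ AddSubgroup.zmultiples (chipDiff n x y 0) := by
  have hchip {k : ℕ} (hk : k ≤ n) : chipDiff n x y k ∈ AddSubgroup.zmultiples (chipDiff n x y 0) :=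
    chain_mem_zmultiples_zero (Nat.isCoprime_iff_coprime.mpr hxy) (fun _ => chipDiff_chain)
      sum_chipDiff hk
  have hsingle (j : Fin n) :
      (Pi.single j 1 : Fin n → ℤ) = ∑ k ∈ range (j + 1), (unitVec n (k + 1) - unitVec n k) := by
    rw [sum_range_sub, unitVec_zero, sub_zero, unitVec_succ]
  obtain ⟨a, rfl⟩ := QuotientAddGroup.mk_surjective z
  rw [pi_eq_sum_univ' a, QuotientAddGroup.mk_sum]
  refine sum_mem fun j _ => ?_
  rw [QuotientAddGroup.mk_zsmul, hsingle, QuotientAddGroup.mk_sum]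
  exact zsmul_mem (sum_mem fun k hk => hchip ((mem_range_succ_iff.mp hk).trans j.isLt.le)) _

theorem Fval_nsmul_chipDiff_zero : Fval n x y • chipDiff n x y 0 = 0 := by
  have h := sum_pow_mul_pow_smul_chain_zero (x := (x : ℤ)) (y := (y : ℤ))
    (fun _ => chipDiff_chain) (sum_chipDiff (n := n))
  rwa [← natCast_zsmul, Fval, Nat.cast_sum]

theorem Fval_dvd_addOrderOf_chipDiff_zero (hxy : Nat.Coprime x y) :
    Fval n x y ∣ addOrderOf (chipDiff n x y 0) := by
  have hcopF : Nat.Coprime (x ^ n) (Fval n x y) := Nat.isCoprime_iff_coprime.mp <| by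
    simpa [Fval] using isCoprime_pow_sum_pow_mul_pow (Nat.isCoprime_iff_coprime.mpr hxy) n
  let φ := QuotientAddGroup.lift (sandpileLattice n x y) (weightHom n x y)
    ((AddSubgroup.closure_le _).mpr (Set.range_subset_iff.mpr weightHom_vvec))
  have hφ : φ (chipDiff n x y 0) = ((x ^ n : ℕ) : ZMod (Fval n x y)) := by
    simp [φ, chipDiff, weightHom_unitVec, weight]
  have h : ((addOrderOf (chipDiff n x y 0) * x ^ n : ℕ) : ZMod (Fval n x y)) = 0 := by
    rw [Nat.cast_mul, ← nsmul_eq_mul, ← hφ, ← map_nsmul, addOrderOf_nsmul_eq_zero, map_zero]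
  exact hcopF.symm.dvd_of_dvd_mul_right ((ZMod.natCast_eq_zero_iff _ _).mp h)

end Sandpile

theorem sandpile_group_cyclic_of_order_F_general
    (n x y : ℕ) (hcop : Nat.Coprime x y) :
    IsAddCyclic ((Fin n → ℤ) ⧸ AddSubgroup.closure (Set.range (vvec n x y))) ∧
    Nat.card ((Fin n → ℤ) ⧸ AddSubgroup.closure (Set.range (vvec n x y)))
      = Fval n x y := by
  have hgen : ∀ z, z ∈ AddSubgroup.zmultiples (chipDiff n x y 0) :=
    mem_zmultiples_chipDiff_zero hcop
  have hord : addOrderOf (chipDiff n x y 0) = Fval n x y :=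
    Nat.dvd_antisymm (addOrderOf_dvd_of_nsmul_eq_zero Fval_nsmul_chipDiff_zero)
      (Fval_dvd_addOrderOf_chipDiff_zero hcop)
  exact ⟨⟨_, hgen⟩, by rw [← hord, addOrderOf_eq_card_of_forall_mem_zmultiples hgen]⟩

/-- The quotient group `ℤ^n / ⟨v_1,…,v_n⟩` (the sandpile group of
the path multigraph `P^{x,y}_n`) is cyclic of order `F = Σ_{k=0}^n x^(n−k)·y^k`. -/
theorem sandpile_group_cyclic_of_order_F
    (n x y : ℕ) (hn : 1 ≤ n) (hx : 0 < x) (hxy : x < y) (hcop : Nat.Coprime x y) :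
    IsAddCyclic ((Fin n → ℤ) ⧸ AddSubgroup.closure (Set.range (vvec n x y))) ∧
    Nat.card ((Fin n → ℤ) ⧸ AddSubgroup.closure (Set.range (vvec n x y)))
      = Fval n x y :=
  sandpile_group_cyclic_of_order_F_general n x y hcop
end

section
/- Let v_k ∈ ℤ^n (for k ∈ {1,…,n}) be the vectors v_k := y·e_{k−1} − (x+y)·e_k + x·e_{k+1}, where e_1,…,e_n is the standard basis of ℤ^n and e_0 := 0, e_{n+1} := 0. The group homomorphism ℤ^n → ℤ/Fℤ sending e_k to h_k mod F is surjective, and its kernel is exactly the subgroup ⟨v_1,…,v_n⟩; hence it induces a group isomorphism ℤ^n / ⟨v_1,…,v_n⟩ ≅ ℤ/Fℤ. -/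
/-- Harmonic values: `h_0 = 0` and `h_k = Σ_{i=0}^{k−1} x^(n−i)·y^i`. -/
def hval (n x y k : ℕ) : ℕ := ∑ i ∈ Finset.range k, x ^ (n - i) * y ^ i

/-!
Write `e_j` for the standard basis vectors of `ℤ^n`, padded by `e_0 = e_{n+1} = 0`, and
`d_j = e_{j+1} - e_j` for `0 ≤ j ≤ n`. Then `v_k = x d_k - y d_{k-1}`, the `d_j` generate `ℤ^n`
and sum to `0`, and `φ(d_j) = x^(n-j) y^j`. In the quotient `Q = ℤ^n / ⟨v_1,…,v_n⟩` the
relations `x d_{j+1} = y d_j` give `x^n d_j = x^(n-j) y^j d_0` and `y^n d_j = x^(n-j) y^j d_n`,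
so with `a x^n + b y^n = 1` every `d_j` is the multiple `x^(n-j) y^j` of `g = a d_0 + b d_n`.
Hence `Q` is cyclic, generated by `g`, with `F g = ∑ d_j = 0`, while `φ(g) = 1`: the map
`Q → ℤ/Fℤ` induced by `φ` is bijective.
-/

open Finset

theorem AddMonoidHom.bijective_of_forall_mem_zmultiples {Q : Type*} [AddCommGroup Q] {N : ℕ}
    (f : Q →+ ZMod N) {g : Q} (hgen : ∀ q, q ∈ AddSubgroup.zmultiples g) (hN : N • g = 0)
    (hfg : f g = 1) : Function.Bijective f := by
  constructor
  · refine (injective_iff_map_eq_zero f).mpr fun q hq => ?_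
    obtain ⟨m, rfl⟩ := hgen q
    rw [map_zsmul, hfg, zsmul_one, ZMod.intCast_zmod_eq_zero_iff_dvd] at hq
    obtain ⟨t, rfl⟩ := hq
    change ((N : ℤ) * t) • g = 0
    rw [mul_comm, mul_zsmul, natCast_zsmul, hN, zsmul_zero]
  · intro z
    obtain ⟨m, rfl⟩ := ZMod.intCast_surjective z
    exact ⟨m • g, by rw [map_zsmul, hfg, zsmul_one]⟩

section Chain

variable {M : Type*} [AddCommGroup M] {x y : ℤ} {n : ℕ} {D : ℕ → M}

theorem pow_smul_add_eq_pow_smul (h : ∀ j < n, x • D (j + 1) = y • D j) (i : ℕ) :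
    ∀ k, i + k ≤ n → x ^ k • D (i + k) = y ^ k • D i
  | 0, _ => by simp
  | k + 1, hk => by
    rw [pow_succ, mul_smul, ← add_assoc, h _ (by omega), smul_comm,
      pow_smul_add_eq_pow_smul h i k (by omega), ← mul_smul, ← pow_succ']

theorem eq_smul_of_step {a b : ℤ} (hab : a * x ^ n + b * y ^ n = 1)
    (h : ∀ j < n, x • D (j + 1) = y • D j) {j : ℕ} (hj : j ≤ n) :
    D j = (x ^ (n - j) * y ^ j) • (a • D 0 + b • D n) := by
  have h₀ := pow_smul_add_eq_pow_smul h 0 j (by omega)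
  have hₙ := pow_smul_add_eq_pow_smul h j (n - j) (by omega)
  rw [zero_add] at h₀
  rw [Nat.add_sub_cancel' hj] at hₙ
  have hxn : x ^ n = x ^ (n - j) * x ^ j := by rw [← pow_add, Nat.sub_add_cancel hj]
  have hyn : y ^ n = y ^ j * y ^ (n - j) := by rw [← pow_add, Nat.add_sub_cancel' hj]
  calc D j = (a * x ^ n + b * y ^ n) • D j := by rw [hab, one_smul]
    _ = _ := by
      rw [hxn, hyn]
      linear_combination (norm := module) (a * x ^ (n - j)) • h₀ - (b * y ^ j) • hₙ

end Chain

/-- The paper's `e_j` (indexed from `1`), with `e_0 = 0` and `e_j = 0` for `j > n`. -/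
def paddedSingle (n j : ℕ) : Fin n → ℤ := fun i => if (i : ℕ) + 1 = j then 1 else 0

def paddedDiff (n j : ℕ) : Fin n → ℤ := paddedSingle n (j + 1) - paddedSingle n j

section Vectors

variable (n : ℕ)

@[simp] theorem paddedSingle_zero : paddedSingle n 0 = 0 := by
  ext i; simp [paddedSingle]

@[simp] theorem paddedSingle_succ_self : paddedSingle n (n + 1) = 0 := by
  ext i; simp [paddedSingle, i.isLt.ne]

theorem paddedSingle_succ (k : Fin n) : paddedSingle n (k + 1) = Pi.single k 1 := by
  ext i; simp [paddedSingle, Pi.single_apply, Fin.val_inj]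

theorem sum_paddedDiff : ∑ j ∈ range (n + 1), paddedDiff n j = 0 := by
  simp only [paddedDiff]
  rw [sum_range_sub (paddedSingle n), paddedSingle_succ_self,
    paddedSingle_zero, sub_zero]

theorem single_eq_sum_paddedDiff (k : Fin n) :
    Pi.single k 1 = ∑ j ∈ range (k + 1), paddedDiff n j := by
  simp only [paddedDiff]
  rw [sum_range_sub (paddedSingle n), paddedSingle_succ, paddedSingle_zero,
    sub_zero]

theorem vvec_eq (x y : ℕ) (k : Fin n) :
    vvec n x y k = (x : ℤ) • paddedDiff n (k + 1) - (y : ℤ) • paddedDiff n k := by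
  ext i
  simp only [vvec, paddedDiff, paddedSingle, Pi.sub_apply, Pi.smul_apply, smul_eq_mul,
    ← Fin.val_inj]
  split_ifs <;> omega

end Vectors

def harmonicHom (n x y : ℕ) : (Fin n → ℤ) →+ ZMod (Fval n x y) :=
  AddMonoidHom.mk' (fun c => ∑ i, c i • (hval n x y (i + 1) : ZMod (Fval n x y)))
    (fun a b => by simp only [Pi.add_apply, add_smul, sum_add_distrib])

section Harmonic

variable (n x y : ℕ)

theorem harmonicHom_single (k : Fin n) :
    harmonicHom n x y (Pi.single k 1) = (hval n x y (k + 1) : ZMod (Fval n x y)) := by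
  simp [harmonicHom, Pi.single_apply]

theorem harmonicHom_paddedSingle {j : ℕ} (hj : j ≤ n + 1) :
    harmonicHom n x y (paddedSingle n j) = (hval n x y j : ZMod (Fval n x y)) := by
  rcases j with _ | j
  · simp [hval]
  obtain hjn | rfl := (Nat.succ_le_succ_iff.mp hj).lt_or_eq
  · exact (paddedSingle_succ n ⟨j, hjn⟩).symm ▸ harmonicHom_single n x y ⟨j, hjn⟩
  · rw [paddedSingle_succ_self, map_zero]
    exact (ZMod.natCast_self _).symm

theorem harmonicHom_paddedDiff {j : ℕ} (hj : j ≤ n) :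
    harmonicHom n x y (paddedDiff n j) = ((x ^ (n - j) * y ^ j : ℕ) : ZMod (Fval n x y)) := by
  rw [paddedDiff, map_sub, harmonicHom_paddedSingle n x y (by omega),
    harmonicHom_paddedSingle n x y (by omega), hval, sum_range_succ, ← hval]
  push_cast
  ring

theorem harmonicHom_vvec (k : Fin n) : harmonicHom n x y (vvec n x y k) = 0 := by
  rw [vvec_eq, map_sub, map_zsmul, map_zsmul, harmonicHom_paddedDiff n x y (j := k + 1) k.isLt,
    harmonicHom_paddedDiff n x y k.isLt.le, show n - k = n - (k + 1) + 1 by omega]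
  simp only [zsmul_eq_mul, Int.cast_natCast, Nat.cast_mul, Nat.cast_pow]
  ring

theorem closure_vvec_le_ker :
    AddSubgroup.closure (Set.range (vvec n x y)) ≤ (harmonicHom n x y).ker :=
  (AddSubgroup.closure_le _).mpr <| Set.range_subset_iff.mpr (harmonicHom_vvec n x y)

end Harmonic

section Quotient

variable {n x y : ℕ} {a b : ℤ} (hab : a * (x : ℤ) ^ n + b * (y : ℤ) ^ n = 1)

local notation "Q" => (Fin n → ℤ) ⧸ AddSubgroup.closure (Set.range (vvec n x y))

local notation "mk" => (QuotientAddGroup.mk : (Fin n → ℤ) → Q)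

local notation "gen" => a • paddedDiff n 0 + b • paddedDiff n n

include hab

theorem mk_paddedDiff {j : ℕ} (hj : j ≤ n) :
    mk (paddedDiff n j) = ((x : ℤ) ^ (n - j) * (y : ℤ) ^ j) • mk gen := by
  have hstep : ∀ j < n, (x : ℤ) • mk (paddedDiff n (j + 1)) = (y : ℤ) • mk (paddedDiff n j) := by
    intro i hi
    have hv : mk (vvec n x y ⟨i, hi⟩) = 0 :=
      (QuotientAddGroup.eq_zero_iff _).mpr (AddSubgroup.subset_closure ⟨_, rfl⟩)
    rwa [vvec_eq, QuotientAddGroup.mk_sub, QuotientAddGroup.mk_zsmul, QuotientAddGroup.mk_zsmul,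
      sub_eq_zero] at hv
  rw [eq_smul_of_step (D := fun j => mk (paddedDiff n j)) hab hstep hj]
  simp only [QuotientAddGroup.mk_add, QuotientAddGroup.mk_zsmul]

theorem mem_zmultiples_mk_gen (q : Q) : q ∈ AddSubgroup.zmultiples (mk gen) := by
  induction q using QuotientAddGroup.induction_on with | H c => ?_
  rw [← univ_sum_single c, QuotientAddGroup.mk_sum]
  refine AddSubgroup.sum_mem _ fun i _ => ?_
  rw [← mul_one (c i), ← smul_eq_mul, Pi.single_smul, QuotientAddGroup.mk_zsmul,
    single_eq_sum_paddedDiff, QuotientAddGroup.mk_sum]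
  refine AddSubgroup.zsmul_mem _ (AddSubgroup.sum_mem _ fun j hj => ?_) _
  rw [mk_paddedDiff hab (by have := i.isLt; rw [mem_range] at hj; omega)]
  exact AddSubgroup.zsmul_mem _ (AddSubgroup.mem_zmultiples _) _

theorem Fval_nsmul_mk_gen : Fval n x y • mk gen = 0 := by
  have hsum := congrArg mk (sum_paddedDiff n)
  rw [QuotientAddGroup.mk_sum, sum_congr rfl fun j hj => mk_paddedDiff hab
    (Nat.lt_succ_iff.mp (mem_range.mp hj)), ← sum_smul, QuotientAddGroup.mk_zero] at hsum
  rw [← natCast_zsmul, Fval, ← hsum]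
  push_cast
  rfl

theorem harmonicHom_gen : harmonicHom n x y gen = 1 := by
  rw [map_add, map_zsmul, map_zsmul, harmonicHom_paddedDiff n x y (Nat.zero_le n),
    harmonicHom_paddedDiff n x y le_rfl]
  push_cast
  simpa using congrArg (Int.cast : ℤ → ZMod (Fval n x y)) hab

theorem bijective_lift_harmonicHom :
    Function.Bijective (QuotientAddGroup.lift _ (harmonicHom n x y) (closure_vvec_le_ker n x y)) :=
  AddMonoidHom.bijective_of_forall_mem_zmultiples _ (mem_zmultiples_mk_gen hab)
    (Fval_nsmul_mk_gen hab) (harmonicHom_gen hab)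

end Quotient

theorem harmonic_hom_surjective_kernel_general
    (n x y : ℕ) (hcop : Nat.Coprime x y) :
    ∃ φ : (Fin n → ℤ) →+ ZMod (Fval n x y),
      (∀ k : Fin n, φ (Pi.single k 1) = (hval n x y ((k : ℕ) + 1) : ZMod (Fval n x y))) ∧
      Function.Surjective φ ∧
      (∀ c : Fin n → ℤ, φ c = 0 ↔ c ∈ AddSubgroup.closure (Set.range (vvec n x y))) ∧
      Nonempty (((Fin n → ℤ) ⧸ AddSubgroup.closure (Set.range (vvec n x y)))
        ≃+ ZMod (Fval n x y)) := by
  obtain ⟨a, b, hab⟩ := (Nat.isCoprime_iff_coprime.mpr hcop).pow (m := n) (n := n)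
  have hbij := bijective_lift_harmonicHom hab
  refine ⟨harmonicHom n x y, harmonicHom_single n x y, hbij.2.comp QuotientAddGroup.mk_surjective,
    fun c => ?_, ⟨AddEquiv.ofBijective _ hbij⟩⟩
  rw [← QuotientAddGroup.eq_zero_iff, ← hbij.1.eq_iff' (map_zero _)]
  exact Iff.rfl

/-- The group homomorphism `ℤ^n → ℤ/Fℤ` sending `e_k` to
`h_k mod F` is surjective, its kernel is exactly `⟨v_1,…,v_n⟩`, and hence it
induces a group isomorphism `ℤ^n / ⟨v_1,…,v_n⟩ ≅ ℤ/Fℤ`. -/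
theorem harmonic_hom_surjective_kernel
    (n x y : ℕ) (hn : 1 ≤ n) (hx : 0 < x) (hxy : x < y) (hcop : Nat.Coprime x y) :
    ∃ φ : (Fin n → ℤ) →+ ZMod (Fval n x y),
      (∀ k : Fin n, φ (Pi.single k 1) = (hval n x y ((k : ℕ) + 1) : ZMod (Fval n x y))) ∧
      Function.Surjective φ ∧
      (∀ c : Fin n → ℤ, φ c = 0 ↔ c ∈ AddSubgroup.closure (Set.range (vvec n x y))) ∧
      Nonempty (((Fin n → ℤ) ⧸ AddSubgroup.closure (Set.range (vvec n x y)))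
        ≃+ ZMod (Fval n x y)) :=
  harmonic_hom_surjective_kernel_general n x y hcop
end
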